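/- arXiv:1109.6180 — 3 statements merged into one kernel-verified Lean document; each statement's English description precedes it below -/
import Mathlib

section
/- Let p be an odd prime. The set 𝒢 is a universal Gröbner basis of the Hilbert ideal I_H: for every monomial order on R, the set 𝒢 generates I_H as an ideal and, for every nonzero f ∈ I_H, the leading monomial LM(f) is divisible by the leading monomial LM(g) of some g ∈ 𝒢. -/
open MvPolynomial

noncomputable section

abbrev DVar (r s : ℕ) := (Fin r ⊕ Fin r) ⊕ (Fin s ⊕ Fin s)

def dswap {r s : ℕ} : DVar r s → DVar r s
  | .inl (.inl i) => .inl (.inr i)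
  | .inl (.inr i) => .inl (.inl i)
  | .inr (.inl j) => .inr (.inr j)
  | .inr (.inr j) => .inr (.inl j)

def sigmaMap (F : Type*) [Field F] (r s : ℕ) :
    MvPolynomial (DVar r s) F →ₐ[F] MvPolynomial (DVar r s) F :=
  MvPolynomial.rename dswap

def rhoCoeff {F : Type*} [Field F] {r s : ℕ} (lam : Fin r → F) : DVar r s → F
  | .inl (.inl i) => lam i
  | .inl (.inr i) => (lam i)⁻¹
  | .inr _ => 1

def rhoMap (F : Type*) [Field F] (r s : ℕ) (lam : Fin r → F) :
    MvPolynomial (DVar r s) F →ₐ[F] MvPolynomial (DVar r s) F :=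
  MvPolynomial.aeval fun v => MvPolynomial.C (rhoCoeff lam v) * MvPolynomial.X v

def HilbertIdeal (F : Type*) [Field F] (r s : ℕ) (lam : Fin r → F) :
    Ideal (MvPolynomial (DVar r s) F) :=
  Ideal.span {f | sigmaMap F r s f = f ∧ rhoMap F r s lam f = f ∧ constantCoeff f = 0}

def IsMonomial {σ F : Type*} [CommSemiring F] (f : MvPolynomial σ F) : Prop :=
  ∃ d : σ →₀ ℕ, f = monomial d 1

def GSet (F : Type*) [Field F] (r s p : ℕ) (lam : Fin r → F) :
    Set (MvPolynomial (DVar r s) F) :=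
  {f | ∃ m, IsMonomial m ∧ rhoMap F r s lam m = m ∧ sigmaMap F r s m ≠ m ∧
      m.totalDegree ≤ p ∧ f = m + sigmaMap F r s m} ∪
  {f | ∃ (m : MvPolynomial (DVar r s) F) (v : DVar r s), IsMonomial m ∧ rhoMap F r s lam m = m ∧ m.totalDegree ≤ p ∧
      X v ∣ m ∧ f = X v * m} ∪
  {f | (∃ i : Fin r, f = X (Sum.inl (Sum.inl i)) * X (Sum.inl (Sum.inr i))) ∨
       (∃ j : Fin s, f = X (Sum.inr (Sum.inl j)) * X (Sum.inr (Sum.inr j)))}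

def lmExp {σ F : Type*} [CommSemiring F] (mo : MonomialOrder σ) (f : MvPolynomial σ F) :
    σ →₀ ℕ :=
  mo.toSyn.symm (f.support.sup fun d => mo.toSyn d)

/-!
Write `wt d` for the scalar by which `ρ` multiplies `X^d`, and `σ` also for its action on
exponents. Both halves rest on Davenport's bound for the group of `p`-th roots of unity: a
weight-one exponent of degree `> p` splits off a weight-one piece of degree `≤ p`.

Generation: an invariant is a combination of `σ`-fixed weight-one monomials, each divisible by
some `x_i y_i` or `z_j w_j`, and of orbit sums `X^d + X^{σ d}` with `wt d = 1`; in characteristic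
two `X^{c+d} + X^{σc+σd} = X^d (X^c + X^{σc}) + X^{σc} (X^d + X^{σd})` brings these down to
degree `≤ p`.

Gröbner property: the exponents divisible by a monomial of `𝒢` are stable under
`n + a ↦ n + σ a` for `wt a = 1`. Hence the coefficients of any `f` in the ideal, restricted to the
other exponents, sum to zero over each class of exponents with equal orbit sum `M + σ M` and
equal weight. If `M = LM(f)` is not divisible by a monomial of `𝒢`, some smaller `N` in the
support of `f` shares its class, so `N = M - b + σ b` with `wt b = 1` and `σ b < b`. A weight-one
piece `c ≤ b` of degree `≤ p` with `σ c < c` then yields the generator `X^c + X^{σc}`, whose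
leading monomial `X^c` divides `X^M`.
-/

namespace Finsupp

variable {ι M : Type*} [CommMonoidWithZero M] [IsCancelMulZero M] {w : (ι →₀ ℕ) → M}

theorem exists_le_map_eq_one_or_exists_card_eq (hw_add : ∀ a b, w (a + b) = w a * w b)
    (hw0 : ∀ a, w a ≠ 0) (d : ι →₀ ℕ) :
    (∃ c ≤ d, c ≠ 0 ∧ w c = 1) ∨
      ∃ A : Finset M, A.card = d.degree + 1 ∧ ∀ x ∈ A, ∃ c ≤ d, w c = x := by
  classical
  induction hn : d.degree generalizing d with
  | zero => exact Or.inr ⟨{w d}, rfl, fun x hx => ⟨d, le_rfl, (Finset.mem_singleton.1 hx).symm⟩⟩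
  | succ n ih =>
    obtain ⟨v, hv⟩ : ∃ v, d v ≠ 0 := by
      by_contra! h
      simp [show d = 0 from ext h] at hn
    have hd' : d - single v 1 + single v 1 = d :=
      tsub_add_cancel_of_le (single_le_iff.2 (Nat.one_le_iff_ne_zero.2 hv))
    have hdeg : (d - single v 1).degree = n := by
      have := congrArg degree hd'
      rw [map_add, degree_single] at this
      omega
    rcases ih _ hdeg with ⟨c, hc, hc0, hwc⟩ | ⟨A, hA, hAw⟩
    · exact Or.inl ⟨c, hc.trans tsub_le_self, hc0, hwc⟩
    by_cases hmem : w d ∈ A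
    · obtain ⟨c, hc, hwc⟩ := hAw _ hmem
      have hcd : c + (d - c) = d := add_tsub_cancel_of_le (hc.trans tsub_le_self)
      refine Or.inl ⟨d - c, tsub_le_self, fun h => ?_, ?_⟩
      · rw [h, add_zero] at hcd
        have := hc v
        rw [hcd, tsub_apply, single_eq_same] at this
        omega
      · apply mul_left_cancel₀ (hw0 c)
        rw [← hw_add, hcd, hwc, mul_one]
    · refine Or.inr ⟨insert (w d) A, by rw [Finset.card_insert_of_notMem hmem, hA], ?_⟩
      simp only [Finset.mem_insert, forall_eq_or_imp]
      exact ⟨⟨d, le_rfl, rfl⟩, fun x hx =>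
        (hAw x hx).imp fun c ⟨hc, hwc⟩ => ⟨hc.trans tsub_le_self, hwc⟩⟩

/-- Davenport's bound: the Davenport constant of a finite abelian group is at most its order. -/
theorem exists_le_degree_le_map_eq_one (hw_add : ∀ a b, w (a + b) = w a * w b)
    (hw0 : ∀ a, w a ≠ 0) {S : Finset M} (hS : ∀ a, w a ∈ S) {d : ι →₀ ℕ}
    (hd : S.card ≤ d.degree) : ∃ c ≤ d, c ≠ 0 ∧ c.degree ≤ S.card ∧ w c = 1 := by
  obtain ⟨d', hd'd, hdeg⟩ := d.exists_le_degree_eq S.card hd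
  rcases exists_le_map_eq_one_or_exists_card_eq hw_add hw0 d' with
    ⟨c, hc, hc0, hwc⟩ | ⟨A, hA, hAw⟩
  · exact ⟨c, hc.trans hd'd, hc0, hdeg ▸ degree_mono hc, hwc⟩
  · have hAS : A ⊆ S := fun x hx => by
      obtain ⟨c, -, rfl⟩ := hAw x hx
      exact hS c
    have := Finset.card_le_card hAS
    omega

end Finsupp

namespace MvPolynomial

variable {σ K : Type*} [CommSemiring K]

lemma totalDegree_monomial_one [Nontrivial K] (d : σ →₀ ℕ) :
    (monomial d (1 : K)).totalDegree = d.degree :=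
  totalDegree_monomial d one_ne_zero

lemma X_mul_X_eq_monomial (v w : σ) :
    (X v * X w : MvPolynomial σ K) = monomial (Finsupp.single v 1 + Finsupp.single w 1) 1 := by
  rw [X, X, monomial_mul, one_mul]

def coeffSum (S : Set (σ →₀ ℕ)) : MvPolynomial σ K →ₗ[K] K :=
  Finsupp.linearCombination K (S.indicator 1) ∘ₗ (AddMonoidAlgebra.coeffLinearEquiv K).toLinearMap

lemma coeffSum_apply (S : Set (σ →₀ ℕ)) (f : MvPolynomial σ K) :
    coeffSum S f = ∑ d ∈ f.support, coeff d f * S.indicator 1 d := by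
  simp [coeffSum, Finsupp.linearCombination_apply, Finsupp.sum, coeff]
  rfl

lemma coeffSum_monomial (S : Set (σ →₀ ℕ)) (d : σ →₀ ℕ) (c : K) :
    coeffSum S (monomial d c) = c * S.indicator 1 d := by
  classical
  rw [coeffSum_apply, support_monomial]
  split_ifs with hc <;> simp [hc]

lemma coeffSum_eq_zero_of_mem_ideal_span {S : Set (σ →₀ ℕ)} {G : Set (MvPolynomial σ K)}
    (hG : ∀ g ∈ G, ∀ d, coeffSum S (monomial d 1 * g) = 0) {f : MvPolynomial σ K}
    (hf : f ∈ Ideal.span G) : coeffSum S f = 0 := by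
  suffices h : ∀ q, coeffSum S (q * f) = 0 by simpa using h 1
  induction hf using Submodule.span_induction with
  | mem g hg =>
    intro q
    induction q using MvPolynomial.induction_on' with
    | monomial d c =>
      rw [show monomial d c = c • monomial d (1 : K) by rw [smul_monomial, smul_eq_mul, mul_one],
        smul_mul_assoc, map_smul, hG g hg d, smul_zero]
    | add q q' hq hq' => rw [add_mul, map_add, hq, hq', add_zero]
  | zero => simp
  | add x y _ _ hx hy => exact fun q => by rw [mul_add, map_add, hx, hy, add_zero]
  | smul c x _ hx => exact fun q => by rw [smul_eq_mul, ← mul_assoc]; exact hx _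

lemma exists_mem_support_ne_of_coeffSum_eq_zero {S : Set (σ →₀ ℕ)} {f : MvPolynomial σ K}
    {M : σ →₀ ℕ} (h : coeffSum S f = 0) (hM : M ∈ S) (hfM : coeff M f ≠ 0) :
    ∃ N ∈ f.support, N ∈ S ∧ N ≠ M := by
  by_contra! hcon
  refine hfM ?_
  rw [← h, coeffSum_apply, Finset.sum_eq_single M]
  · simp [hM]
  · intro N hN hNM
    simp [Set.indicator_of_notMem (fun hNS => hNM (hcon N hN hNS))]
  · simp_all

end MvPolynomial

namespace DihedralGroebner

open Finsupp

variable {r s : ℕ}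

lemma dswap_involutive : Function.Involutive (dswap : DVar r s → DVar r s) := by
  rintro ((i | i) | (j | j)) <;> rfl

lemma dswap_ne (v : DVar r s) : dswap v ≠ v := by
  rcases v with (i | i) | (j | j) <;> simp [dswap]

def swapExp : (DVar r s →₀ ℕ) ≃+ (DVar r s →₀ ℕ) :=
  Finsupp.domCongr (dswap_involutive.toPerm _)

@[simp]
lemma swapExp_apply (d : DVar r s →₀ ℕ) (v : DVar r s) : swapExp d v = d (dswap v) := by
  simp [swapExp, Function.Involutive.toPerm_symm]

@[simp]
lemma swapExp_swapExp (d : DVar r s →₀ ℕ) : swapExp (swapExp d) = d := by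
  ext v
  simp [dswap_involutive v]

lemma swapExp_eq_mapDomain (d : DVar r s →₀ ℕ) : swapExp d = d.mapDomain dswap :=
  equivMapDomain_eq_mapDomain _ d

lemma swapExp_single (v : DVar r s) (n : ℕ) : swapExp (single v n) = single (dswap v) n := by
  rw [swapExp_eq_mapDomain, mapDomain_single]

lemma swapExp_single_add_single_dswap (v : DVar r s) :
    swapExp (single v 1 + single (dswap v) 1) = single v 1 + single (dswap v) 1 := by
  rw [map_add, swapExp_single, swapExp_single, dswap_involutive v, add_comm]

lemma single_add_single_dswap_ne_zero (v : DVar r s) :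
    (single v 1 + single (dswap v) 1 : DVar r s →₀ ℕ) ≠ 0 := by
  simp

lemma single_add_single_dswap_le {M : DVar r s →₀ ℕ} {v : DVar r s} (hv : M v ≠ 0)
    (hσv : M (dswap v) ≠ 0) : single v 1 + single (dswap v) 1 ≤ M := by
  intro w
  simp only [Finsupp.coe_add, Pi.add_apply, single_apply]
  split_ifs <;> subst_vars <;> first | omega | exact absurd ‹dswap _ = _› (dswap_ne _)

lemma single_add_le_of_lt {m M : DVar r s →₀ ℕ} (hmM : m ≤ M) {u : DVar r s} (hu : m u < M u) :
    single u 1 + m ≤ M := by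
  intro w
  have := hmM w
  simp only [Finsupp.coe_add, Pi.add_apply, single_apply]
  split_ifs <;> subst_vars <;> omega

variable {F : Type*} [Field F]

def wt (lam : Fin r → F) (d : DVar r s →₀ ℕ) : F :=
  d.prod fun v k => rhoCoeff lam v ^ k

variable {lam : Fin r → F}

lemma wt_add (a b : DVar r s →₀ ℕ) : wt lam (a + b) = wt lam a * wt lam b :=
  prod_add_index' (fun _ => pow_zero _) fun _ _ _ => pow_add _ _ _

@[simp]
lemma wt_single (v : DVar r s) (k : ℕ) : wt lam (single v k) = rhoCoeff lam v ^ k :=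
  prod_single_index (pow_zero _)

lemma wt_tsub {c d : DVar r s →₀ ℕ} (hcd : c ≤ d) (hc : wt lam c = 1) :
    wt lam (d - c) = wt lam d := by
  rw [← add_tsub_cancel_of_le hcd, add_tsub_cancel_left, wt_add, hc, one_mul]

lemma wt_pow_eq_one {p : ℕ} (hlam : ∀ i, lam i ^ p = 1) (d : DVar r s →₀ ℕ) :
    wt lam d ^ p = 1 := by
  refine (Finset.prod_pow _ _ _).symm.trans (Finset.prod_eq_one fun v _ => ?_)
  rw [← pow_mul, mul_comm, pow_mul]
  rcases v with (i | i) | (j | j)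
  · simp [rhoCoeff, hlam i]
  · simp [rhoCoeff, inv_pow, hlam i]
  all_goals simp [rhoCoeff]

lemma lam_ne_zero {p : ℕ} (hp : 0 < p) (hlam : ∀ i, lam i ^ p = 1) (i : Fin r) : lam i ≠ 0 :=
  fun h => by simpa [h, zero_pow hp.ne'] using hlam i

lemma sigmaMap_monomial (d : DVar r s →₀ ℕ) (c : F) :
    sigmaMap F r s (monomial d c) = monomial (swapExp d) c := by
  rw [sigmaMap, rename_monomial, swapExp_eq_mapDomain]

lemma coeff_swapExp_of_sigmaMap_eq {f : MvPolynomial (DVar r s) F} (hf : sigmaMap F r s f = f)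
    (d : DVar r s →₀ ℕ) : coeff (swapExp d) f = coeff d f := by
  conv_lhs => rw [← hf]
  rw [sigmaMap, swapExp_eq_mapDomain, coeff_rename_mapDomain _ dswap_involutive.injective]

lemma sigmaMap_monomial_one_eq_iff (d : DVar r s →₀ ℕ) :
    sigmaMap F r s (monomial d (1 : F)) = monomial d 1 ↔ swapExp d = d := by
  simp [sigmaMap_monomial]

lemma rhoMap_monomial (d : DVar r s →₀ ℕ) (c : F) :
    rhoMap F r s lam (monomial d c) = monomial d (wt lam d * c) := by
  rw [rhoMap, aeval_monomial, monomial_eq, C_mul, wt, map_finsuppProd]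
  simp only [mul_pow, Finsupp.prod_mul, map_pow, algebraMap_eq]
  ring

lemma rhoMap_monomial_one_eq_iff (d : DVar r s →₀ ℕ) :
    rhoMap F r s lam (monomial d 1) = monomial d 1 ↔ wt lam d = 1 := by
  simp [rhoMap_monomial, monomial_eq_monomial_iff]

lemma coeff_rhoMap (f : MvPolynomial (DVar r s) F) (d : DVar r s →₀ ℕ) :
    coeff d (rhoMap F r s lam f) = wt lam d * coeff d f := by
  induction f using MvPolynomial.induction_on' with
  | monomial e c =>
    rw [rhoMap_monomial, coeff_monomial, coeff_monomial]
    split_ifs with h <;> simp [h]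
  | add f g hf hg => rw [map_add, coeff_add, coeff_add, hf, hg, mul_add]

lemma wt_eq_one_of_rhoMap_eq {f : MvPolynomial (DVar r s) F} (hf : rhoMap F r s lam f = f)
    {d : DVar r s →₀ ℕ} (hd : d ∈ f.support) : wt lam d = 1 := by
  have h := coeff_rhoMap (lam := lam) f d
  rw [hf] at h
  exact (mul_eq_right₀ (MvPolynomial.mem_support_iff.1 hd)).1 h.symm

lemma monomial_add_monomial_swapExp_ne_zero {c : DVar r s →₀ ℕ} (hσc : swapExp c ≠ c) :
    (monomial c 1 + monomial (swapExp c) 1 : MvPolynomial (DVar r s) F) ≠ 0 := fun h => by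
  simpa [coeff_monomial, hσc] using congrArg (coeff c) h

lemma degree_monomial_add_monomial_swapExp (mo : MonomialOrder (DVar r s))
    {c : DVar r s →₀ ℕ} (hc : mo.toSyn (swapExp c) < mo.toSyn c) :
    mo.degree (monomial c 1 + monomial (swapExp c) (1 : F)) = c := by
  classical
  rw [mo.degree_add_of_lt] <;> simp [mo.degree_monomial, hc]

/-- Exponents of the monomials in `𝒢`: those of type (ii), then those of type (iii). -/
def monomialGens (lam : Fin r → F) (p : ℕ) : Set (DVar r s →₀ ℕ) :=
  {e | ∃ u m, wt lam m = 1 ∧ m.degree ≤ p ∧ m u ≠ 0 ∧ e = single u 1 + m} ∪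
    Set.range fun v => single v 1 + single (dswap v) 1

lemma mem_GSet_iff {p : ℕ} {g : MvPolynomial (DVar r s) F} :
    g ∈ GSet F r s p lam ↔
      (∃ a, wt lam a = 1 ∧ a.degree ≤ p ∧ swapExp a ≠ a ∧
        g = monomial a 1 + monomial (swapExp a) 1) ∨
      ∃ e ∈ monomialGens lam p, g = monomial e 1 := by
  simp only [GSet, IsMonomial, Set.mem_union, Set.mem_ofPred_eq]
  constructor
  · rintro ((⟨_, ⟨a, rfl⟩, hρ, hσ, hdeg, rfl⟩ | ⟨_, u, ⟨m, rfl⟩, hρ, hdeg, hdvd, rfl⟩) |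
      (⟨i, rfl⟩ | ⟨j, rfl⟩))
    · rw [rhoMap_monomial_one_eq_iff] at hρ
      rw [totalDegree_monomial_one] at hdeg
      exact Or.inl ⟨a, hρ, hdeg, (sigmaMap_monomial_one_eq_iff a).not.1 hσ,
        by rw [sigmaMap_monomial]⟩
    · rw [rhoMap_monomial_one_eq_iff] at hρ
      rw [totalDegree_monomial_one] at hdeg
      have hu : m u ≠ 0 := (X_dvd_monomial.1 hdvd).resolve_left one_ne_zero
      exact Or.inr ⟨_, Or.inl ⟨u, m, hρ, hdeg, hu, rfl⟩, by rw [monomial_single_add, pow_one]⟩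
    · exact Or.inr ⟨_, Or.inr ⟨.inl (.inl i), rfl⟩, X_mul_X_eq_monomial _ _⟩
    · exact Or.inr ⟨_, Or.inr ⟨.inr (.inl j), rfl⟩, X_mul_X_eq_monomial _ _⟩
  · rintro (⟨a, hw, hdeg, hσ, rfl⟩ | ⟨e, (⟨u, m, hw, hdeg, hu, rfl⟩ | ⟨v, rfl⟩), rfl⟩)
    · refine Or.inl (Or.inl ⟨_, ⟨a, rfl⟩, (rhoMap_monomial_one_eq_iff a).2 hw,
        (sigmaMap_monomial_one_eq_iff a).not.2 hσ, ?_, by rw [sigmaMap_monomial]⟩)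
      rwa [totalDegree_monomial_one]
    · refine Or.inl (Or.inr ⟨_, u, ⟨m, rfl⟩, (rhoMap_monomial_one_eq_iff m).2 hw, ?_,
        X_dvd_monomial.2 (Or.inr hu), by rw [monomial_single_add, pow_one]⟩)
      rwa [totalDegree_monomial_one]
    · right
      rcases v with (i | i) | (j | j)
      · exact Or.inl ⟨i, (X_mul_X_eq_monomial _ _).symm⟩
      · exact Or.inl ⟨i, by rw [X_mul_X_eq_monomial, add_comm]; rfl⟩
      · exact Or.inr ⟨j, (X_mul_X_eq_monomial _ _).symm⟩
      · exact Or.inr ⟨j, by rw [X_mul_X_eq_monomial, add_comm]; rfl⟩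

lemma monomial_mem_hilbertIdeal {d : DVar r s →₀ ℕ} (hw : wt lam d = 1) (hσ : swapExp d = d)
    (hd : d ≠ 0) : monomial d 1 ∈ HilbertIdeal F r s lam :=
  Ideal.subset_span ⟨by rw [sigmaMap_monomial, hσ], (rhoMap_monomial_one_eq_iff d).2 hw,
    by classical simp [constantCoeff_monomial, hd]⟩

lemma monomial_mem_span_GSet_of_swapExp_eq {p : ℕ} {d : DVar r s →₀ ℕ} (hσ : swapExp d = d)
    (hd : d ≠ 0) : monomial d 1 ∈ Ideal.span (GSet F r s p lam) := by
  obtain ⟨v, hv⟩ : ∃ v, d v ≠ 0 := by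
    by_contra! h
    exact hd (ext h)
  have hσv : d (dswap v) ≠ 0 := by rwa [← swapExp_apply, hσ]
  rw [← add_tsub_cancel_of_le (single_add_single_dswap_le hv hσv), ← mul_one (1 : F),
    ← monomial_mul]
  exact Ideal.mul_mem_right _ _
    (Ideal.subset_span (mem_GSet_iff.2 (Or.inr ⟨_, Or.inr ⟨v, rfl⟩, rfl⟩)))

/-- Divisibility by a monomial of `𝒢` (`reducible_of_le`, `Reducible.exists_monomialGens_le`),
in a form free of the degree bound `p` and hence stable under `n + a ↦ n + σ a`
(`Reducible.add_swapExp`). -/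
def Reducible (lam : Fin r → F) (M : DVar r s →₀ ℕ) : Prop :=
  (∃ v, M v ≠ 0 ∧ M (dswap v) ≠ 0) ∨ ∃ m ≤ M, wt lam m = 1 ∧ ∃ u, m u ≠ 0 ∧ m u < M u

lemma reducible_of_le {p : ℕ} {e M : DVar r s →₀ ℕ} (he : e ∈ monomialGens lam p) (heM : e ≤ M) :
    Reducible lam M := by
  rcases he with ⟨u, m, hw, -, hu, rfl⟩ | ⟨v, rfl⟩
  · have := heM u
    simp only [Finsupp.coe_add, Pi.add_apply, single_eq_same] at this
    exact Or.inr ⟨m, le_add_self.trans heM, hw, u, hu, by omega⟩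
  · have h1 := heM v
    have h2 := heM (dswap v)
    simp [dswap_ne, (dswap_ne v).symm] at h1 h2
    exact Or.inl ⟨v, by omega, by omega⟩

def swapClass (lam : Fin r → F) (M : DVar r s →₀ ℕ) : Set (DVar r s →₀ ℕ) :=
  {N | ¬Reducible lam N ∧ N + swapExp N = M + swapExp M ∧ wt lam N = wt lam M}

section NonzeroWeights

variable (hlam0 : ∀ i, lam i ≠ 0)
include hlam0

lemma rhoCoeff_mul_rhoCoeff_dswap (v : DVar r s) :
    rhoCoeff lam v * rhoCoeff lam (dswap v) = 1 := by
  rcases v with (i | i) | (j | j)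
  · exact mul_inv_cancel₀ (hlam0 i)
  · exact inv_mul_cancel₀ (hlam0 i)
  all_goals exact mul_one 1

lemma wt_ne_zero (d : DVar r s →₀ ℕ) : wt lam d ≠ 0 :=
  Finset.prod_ne_zero_iff.2 fun v _ =>
    pow_ne_zero _ (left_ne_zero_of_mul_eq_one (rhoCoeff_mul_rhoCoeff_dswap hlam0 v))

lemma wt_mul_wt_swapExp (d : DVar r s →₀ ℕ) : wt lam d * wt lam (swapExp d) = 1 := by
  induction d using Finsupp.induction with
  | zero => simp [wt]
  | single_add v n d _ _ ih =>
    rw [map_add, wt_add, wt_add, swapExp_single, wt_single, wt_single,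
      mul_mul_mul_comm, ← mul_pow, rhoCoeff_mul_rhoCoeff_dswap hlam0, one_pow, one_mul, ih]

lemma wt_swapExp_eq_one {d : DVar r s →₀ ℕ} (h : wt lam d = 1) : wt lam (swapExp d) = 1 := by
  simpa [h] using wt_mul_wt_swapExp hlam0 d

lemma wt_single_add_single_dswap (v : DVar r s) :
    wt lam (single v 1 + single (dswap v) 1) = 1 := by
  rw [wt_add, wt_single, wt_single, pow_one, pow_one, rhoCoeff_mul_rhoCoeff_dswap hlam0]

lemma monomial_add_monomial_swapExp_mem_hilbertIdeal {d : DVar r s →₀ ℕ} (hw : wt lam d = 1)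
    (hd : d ≠ 0) : monomial d 1 + monomial (swapExp d) 1 ∈ HilbertIdeal F r s lam :=
  Ideal.subset_span
    ⟨by rw [map_add, sigmaMap_monomial, sigmaMap_monomial, swapExp_swapExp, add_comm],
      by rw [map_add, rhoMap_monomial, rhoMap_monomial, hw, wt_swapExp_eq_one hlam0 hw, mul_one],
      by classical simp [constantCoeff_monomial, hd]⟩

lemma GSet_subset_hilbertIdeal [CharP F 2] {p : ℕ} :
    GSet F r s p lam ⊆ HilbertIdeal F r s lam := by
  intro g hg
  rcases mem_GSet_iff.1 hg with ⟨a, hw, -, hσ, rfl⟩ | ⟨e, ⟨u, m, hw, -, hu, rfl⟩ | ⟨v, rfl⟩, rfl⟩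
  · exact monomial_add_monomial_swapExp_mem_hilbertIdeal hlam0 hw
      fun h => hσ (by rw [h, map_zero])
  · -- `u m = u (m + σ m) + (u σu) (σ m / σ u)` in characteristic two
    have hle : single (dswap u) 1 ≤ swapExp m := by
      simpa [dswap_involutive u, Nat.one_le_iff_ne_zero] using hu
    have hsplit : (monomial (single u 1 + m) 1 : MvPolynomial (DVar r s) F) =
        monomial (single u 1) 1 * (monomial m 1 + monomial (swapExp m) 1) +
          monomial (single u 1 + single (dswap u) 1) 1 *
            monomial (swapExp m - single (dswap u) 1) 1 := by
      rw [mul_add, monomial_mul, monomial_mul, monomial_mul, one_mul, add_assoc (single u 1),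
        add_tsub_cancel_of_le hle, CharTwo.add_cancel_right]
    rw [hsplit]
    exact Ideal.add_mem _
      (Ideal.mul_mem_left _ _ (monomial_add_monomial_swapExp_mem_hilbertIdeal hlam0 hw
        fun h => hu (by rw [h, Finsupp.coe_zero, Pi.zero_apply])))
      (Ideal.mul_mem_right _ _ (monomial_mem_hilbertIdeal (wt_single_add_single_dswap hlam0 u)
        (swapExp_single_add_single_dswap u) (single_add_single_dswap_ne_zero u)))
  · exact monomial_mem_hilbertIdeal (wt_single_add_single_dswap hlam0 v)
      (swapExp_single_add_single_dswap v) (single_add_single_dswap_ne_zero v)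

lemma reducible_add_swapExp_of_lt {n a m : DVar r s →₀ ℕ} (ha : wt lam a = 1) (hmM : m ≤ n + a)
    (hw : wt lam m = 1) {u : DVar r s} (hu : m u ≠ 0) (hlt : m u < (n + a) u)
    (hone : (n + swapExp a) u = 0 ∨ (n + swapExp a) (dswap u) = 0) :
    Reducible lam (n + swapExp a) := by
  -- the part of `m` outside `a`, plus the part of `a` outside `m` moved to the other side
  set m' := (m - a) + swapExp (a - m)
  have hbal : (m - a) + a = (a - m) + m := by
    ext w
    simp only [Finsupp.coe_add, coe_tsub, Pi.add_apply, Pi.sub_apply]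
    omega
  have hwm' : wt lam m' = 1 := by
    have h := congrArg (wt lam) hbal
    rw [wt_add, wt_add, ha, hw, mul_one, mul_one] at h
    rw [wt_add, h, wt_mul_wt_swapExp hlam0]
  have hm'le : m' ≤ n + swapExp a := by
    intro w
    have := hmM w
    simp only [m', Finsupp.coe_add, coe_tsub, Pi.add_apply, Pi.sub_apply, swapExp_apply] at this ⊢
    omega
  refine Or.inr ⟨m', hm'le, hwm', ?_⟩
  have h1 := hmM u
  have h2 := hmM (dswap u)
  simp only [Finsupp.coe_add, Pi.add_apply, swapExp_apply, dswap_involutive u] at h1 h2 hlt hone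
  by_cases hau : m u < a u
  · refine ⟨dswap u, ?_, ?_⟩ <;>
      simp only [m', Finsupp.coe_add, coe_tsub, Pi.add_apply, Pi.sub_apply, swapExp_apply,
        dswap_involutive u] <;> omega
  · refine ⟨u, ?_, ?_⟩ <;>
      simp only [m', Finsupp.coe_add, coe_tsub, Pi.add_apply, Pi.sub_apply, swapExp_apply] <;>
      omega

lemma Reducible.add_swapExp {n a : DVar r s →₀ ℕ} (ha : wt lam a = 1)
    (h : Reducible lam (n + a)) : Reducible lam (n + swapExp a) := by
  by_cases htwo : ∃ v, (n + swapExp a) v ≠ 0 ∧ (n + swapExp a) (dswap v) ≠ 0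
  · exact Or.inl htwo
  have hone : ∀ v, (n + swapExp a) v = 0 ∨ (n + swapExp a) (dswap v) = 0 := fun v => by
    by_contra! hv
    exact htwo ⟨v, hv⟩
  rcases h with ⟨v, hv, hσv⟩ | ⟨m, hmM, hw, u, hu, hlt⟩
  · have h := hone v
    simp only [Finsupp.coe_add, Pi.add_apply, swapExp_apply, dswap_involutive v] at hv hσv h
    refine Or.inr ⟨swapExp a, le_add_self, wt_swapExp_eq_one hlam0 ha, ?_⟩
    rcases h with h | h
    · exact ⟨dswap v, by simp [dswap_involutive v]; omega, by simp [dswap_involutive v]; omega⟩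
    · exact ⟨v, by simp; omega, by simp; omega⟩
  · exact reducible_add_swapExp_of_lt hlam0 ha hmM hw hu hlt (hone u)

lemma reducible_add_swapExp_iff {n a : DVar r s →₀ ℕ} (ha : wt lam a = 1) :
    Reducible lam (n + swapExp a) ↔ Reducible lam (n + a) :=
  ⟨fun h => by simpa using h.add_swapExp hlam0 (wt_swapExp_eq_one hlam0 ha),
    Reducible.add_swapExp hlam0 ha⟩

lemma add_swapExp_mem_swapClass_iff {n a M : DVar r s →₀ ℕ} (ha : wt lam a = 1) :
    n + swapExp a ∈ swapClass lam M ↔ n + a ∈ swapClass lam M := by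
  have horbit : n + swapExp a + swapExp (n + swapExp a) = n + a + swapExp (n + a) := by
    rw [map_add, map_add, swapExp_swapExp]
    abel
  simp only [swapClass, Set.mem_ofPred_eq, reducible_add_swapExp_iff hlam0 ha, horbit, wt_add, ha,
    wt_swapExp_eq_one hlam0 ha]

lemma coeffSum_swapClass_monomial_mul_eq_zero [CharP F 2] {p : ℕ}
    {g : MvPolynomial (DVar r s) F} (hg : g ∈ GSet F r s p lam) (M n : DVar r s →₀ ℕ) :
    coeffSum (swapClass lam M) (monomial n 1 * g) = 0 := by
  classical
  rcases mem_GSet_iff.1 hg with ⟨a, hw, -, -, rfl⟩ | ⟨e, he, rfl⟩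
  · rw [mul_add, monomial_mul, monomial_mul, map_add, coeffSum_monomial, coeffSum_monomial,
      Set.indicator_apply, Set.indicator_apply, add_swapExp_mem_swapClass_iff hlam0 hw]
    exact CharTwo.add_self_eq_zero _
  · rw [monomial_mul, coeffSum_monomial, Set.indicator_of_notMem, mul_zero]
    exact fun h => h.1 (reducible_of_le he le_add_self)

lemma exists_lt_mem_swapClass [CharP F 2] {p : ℕ} (mo : MonomialOrder (DVar r s))
    {f : MvPolynomial (DVar r s) F} (hf : f ∈ Ideal.span (GSet F r s p lam)) (hf0 : f ≠ 0)
    (hM : ¬Reducible lam (mo.degree f)) :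
    ∃ N ∈ swapClass lam (mo.degree f), mo.toSyn N < mo.toSyn (mo.degree f) := by
  obtain ⟨N, hN, hNM, hNne⟩ := exists_mem_support_ne_of_coeffSum_eq_zero
    (coeffSum_eq_zero_of_mem_ideal_span
      (fun g hg n => coeffSum_swapClass_monomial_mul_eq_zero hlam0 hg _ n) hf)
    (⟨hM, rfl, rfl⟩ : mo.degree f ∈ swapClass lam (mo.degree f))
    (mo.coeff_degree_ne_zero_iff.2 hf0)
  exact ⟨N, hNM, lt_of_le_of_ne (mo.le_degree hN) (mo.toSyn.injective.ne hNne)⟩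

/-- A non-`Reducible` `M` uses at most one variable of each pair `{x_i, y_i}`, `{z_j, w_j}`,
so `N` arises from `M` by moving some `b ≤ M` to the other side; `wt b ^ 2 = 1` forces
`wt b = 1` in characteristic two. -/
lemma exists_add_eq_of_mem_swapClass [CharP F 2] {M N : DVar r s →₀ ℕ} (hM : ¬Reducible lam M)
    (hN : N ∈ swapClass lam M) : ∃ b ≤ M, wt lam b = 1 ∧ N + b = M + swapExp b := by
  obtain ⟨-, horbit, hwt⟩ := hN
  have hone : ∀ v, M v = 0 ∨ M (dswap v) = 0 := fun v => by
    by_contra! h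
    exact hM (Or.inl ⟨v, h⟩)
  have hNb : N + (M - N) = M + swapExp (M - N) := by
    ext v
    have h1 := DFunLike.congr_fun horbit v
    have h2 := hone v
    simp only [Finsupp.coe_add, coe_tsub, Pi.add_apply, Pi.sub_apply, swapExp_apply] at h1 ⊢
    omega
  refine ⟨M - N, tsub_le_self, ?_, hNb⟩
  have hsq : wt lam (M - N) ^ 2 = 1 := by
    have h := congrArg (wt lam) hNb
    rw [wt_add, wt_add, hwt] at h
    apply mul_left_cancel₀ (wt_ne_zero hlam0 M)
    rw [sq, ← mul_assoc, h, mul_assoc, mul_comm (wt lam (swapExp _)), wt_mul_wt_swapExp hlam0,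
      mul_one]
  exact CharTwo.sq_injective (hsq.trans (one_pow 2).symm)

end NonzeroWeights

section RootsOfUnity

variable {p : ℕ} (hp : 0 < p) (hlam : ∀ i, lam i ^ p = 1)
include hp hlam

theorem weightOne_induction {P : (DVar r s →₀ ℕ) → Prop}
    (small : ∀ b, wt lam b = 1 → b.degree ≤ p → P b)
    (add : ∀ c d, wt lam c = 1 → wt lam d = 1 → P c → P d → P (c + d))
    {b : DVar r s →₀ ℕ} (hb : wt lam b = 1) : P b := by
  classical
  induction hn : b.degree using Nat.strong_induction_on generalizing b with
  | _ n ih =>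
  by_cases hbp : b.degree ≤ p
  · exact small b hb hbp
  have hcard : (Polynomial.nthRootsFinset p (1 : F)).card ≤ p := by
    rw [Polynomial.nthRootsFinset_def]
    exact (Multiset.toFinset_card_le _).trans (Polynomial.card_nthRoots p 1)
  obtain ⟨c, hcb, hc0, hcp, hwc⟩ := exists_le_degree_le_map_eq_one wt_add
    (wt_ne_zero (lam_ne_zero hp hlam))
    (fun d => (Polynomial.mem_nthRootsFinset hp 1).2 (wt_pow_eq_one hlam d))
    (d := b) (by omega)
  have hdeg : c.degree + (b - c).degree = n := by
    rw [← map_add, add_tsub_cancel_of_le hcb, hn]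
  have hc_pos : 0 < c.degree := Nat.pos_of_ne_zero ((degree_eq_zero_iff c).not.2 hc0)
  have hwbc : wt lam (b - c) = 1 := (wt_tsub hcb hwc).trans hb
  rw [← add_tsub_cancel_of_le hcb]
  exact add c (b - c) hwc hwbc (small c hwc (hcp.trans hcard)) (ih _ (by omega) hwbc rfl)

lemma monomial_add_monomial_swapExp_mem_span_GSet [CharP F 2] {b : DVar r s →₀ ℕ}
    (hb : wt lam b = 1) :
    monomial b 1 + monomial (swapExp b) 1 ∈ Ideal.span (GSet F r s p lam) := by
  refine weightOne_induction (P := fun b => monomial b 1 + monomial (swapExp b) 1 ∈ _) hp hlam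
    (fun b hw hdeg => ?_) (fun c d _ _ hc hd => ?_) hb
  · by_cases hσ : swapExp b = b
    · rw [hσ, CharTwo.add_self_eq_zero]
      exact Ideal.zero_mem _
    · exact Ideal.subset_span (mem_GSet_iff.2 (Or.inl ⟨b, hw, hdeg, hσ, rfl⟩))
  · have hsplit : (monomial (c + d) 1 + monomial (swapExp (c + d)) 1 : MvPolynomial _ F) =
        monomial d 1 * (monomial c 1 + monomial (swapExp c) 1) +
          monomial (swapExp c) 1 * (monomial d 1 + monomial (swapExp d) 1) := by
      rw [map_add, mul_add, mul_add, monomial_mul, monomial_mul, monomial_mul, monomial_mul,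
        one_mul, add_comm d c, add_comm d (swapExp c)]
      linear_combination -CharTwo.add_self_eq_zero (monomial (swapExp c + d) (1 : F))
    rw [hsplit]
    exact Ideal.add_mem _ (Ideal.mul_mem_left _ _ hc) (Ideal.mul_mem_left _ _ hd)

lemma mem_span_GSet_of_invariant [CharP F 2] {f : MvPolynomial (DVar r s) F}
    (hσ : sigmaMap F r s f = f) (hρ : rhoMap F r s lam f = f) (h0 : constantCoeff f = 0) :
    f ∈ Ideal.span (GSet F r s p lam) := by
  rw [← Ideal.Quotient.eq_zero_iff_mem, f.as_sum, map_sum]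
  refine Finset.sum_involution (fun d _ => swapExp d) (fun d hd => ?_) (fun d hd hne => ?_)
    (fun d hd => ?_) (fun d _ => swapExp_swapExp d)
  · rw [coeff_swapExp_of_sigmaMap_eq hσ, ← map_add, Ideal.Quotient.eq_zero_iff_mem,
      ← mul_one (coeff d f), ← C_mul_monomial, ← C_mul_monomial, ← mul_add]
    exact Ideal.mul_mem_left _ _
      (monomial_add_monomial_swapExp_mem_span_GSet hp hlam (wt_eq_one_of_rhoMap_eq hρ hd))
  · have hd0 : d ≠ 0 := by
      rintro rfl
      exact (MvPolynomial.mem_support_iff.1 hd) (by rwa [constantCoeff_eq] at h0)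
    refine fun hσd => hne ?_
    rw [Ideal.Quotient.eq_zero_iff_mem, ← mul_one (coeff d f), ← C_mul_monomial]
    exact Ideal.mul_mem_left _ _ (monomial_mem_span_GSet_of_swapExp_eq hσd hd0)
  · rwa [MvPolynomial.mem_support_iff, coeff_swapExp_of_sigmaMap_eq hσ,
      ← MvPolynomial.mem_support_iff]

theorem span_GSet_eq_hilbertIdeal [CharP F 2] :
    Ideal.span (GSet F r s p lam) = HilbertIdeal F r s lam :=
  le_antisymm (Ideal.span_le.2 (GSet_subset_hilbertIdeal (lam_ne_zero hp hlam)))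
    (Ideal.span_le.2 fun _ ⟨hσ, hρ, h0⟩ => mem_span_GSet_of_invariant hp hlam hσ hρ h0)

lemma Reducible.exists_monomialGens_le {M : DVar r s →₀ ℕ} (h : Reducible lam M) :
    ∃ e ∈ monomialGens lam p, e ≤ M := by
  rcases h with ⟨v, hv, hσv⟩ | ⟨m, hmM, hw, u, hu, hlt⟩
  · exact ⟨_, Or.inr ⟨v, rfl⟩, single_add_single_dswap_le hv hσv⟩
  refine weightOne_induction hp hlam
    (P := fun m => ∀ u, m u ≠ 0 → m ≤ M → m u < M u → ∃ e ∈ monomialGens lam p, e ≤ M)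
    (fun m hw hdeg u hu hmM hlt => ⟨_, Or.inl ⟨u, m, hw, hdeg, hu, rfl⟩,
      single_add_le_of_lt hmM hlt⟩) ?_ hw u hu hmM hlt
  intro c d _ _ hc hd u hu hcdM hlt
  simp only [Finsupp.coe_add, Pi.add_apply] at hu hlt
  by_cases hcu : c u = 0
  · exact hd u (by omega) (le_add_self.trans hcdM) (by omega)
  · exact hc u hcu (le_self_add.trans hcdM) (by omega)

lemma exists_le_swapExp_lt (mo : MonomialOrder (DVar r s)) {b : DVar r s →₀ ℕ}
    (hb : wt lam b = 1) (hlt : mo.toSyn (swapExp b) < mo.toSyn b) :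
    ∃ c ≤ b, wt lam c = 1 ∧ c.degree ≤ p ∧ mo.toSyn (swapExp c) < mo.toSyn c := by
  refine weightOne_induction hp hlam (P := fun b => mo.toSyn (swapExp b) < mo.toSyn b →
      ∃ c ≤ b, wt lam c = 1 ∧ c.degree ≤ p ∧ mo.toSyn (swapExp c) < mo.toSyn c)
    (fun b hw hdeg h => ⟨b, le_rfl, hw, hdeg, h⟩) (fun c d _ _ hc hd h => ?_) hb hlt
  by_cases hcσ : mo.toSyn (swapExp c) < mo.toSyn c
  · obtain ⟨e, he, hwe⟩ := hc hcσ
    exact ⟨e, he.trans le_self_add, hwe⟩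
  · have hdσ : mo.toSyn (swapExp d) < mo.toSyn d := by
      by_contra hdσ
      rw [map_add, map_add, map_add] at h
      exact (add_le_add (not_lt.1 hcσ) (not_lt.1 hdσ)).not_gt h
    obtain ⟨e, he, hwe⟩ := hd hdσ
    exact ⟨e, he.trans le_add_self, hwe⟩

theorem exists_mem_GSet_degree_dvd [CharP F 2] (mo : MonomialOrder (DVar r s))
    {f : MvPolynomial (DVar r s) F} (hf : f ∈ Ideal.span (GSet F r s p lam)) (hf0 : f ≠ 0) :
    ∃ g ∈ GSet F r s p lam, g ≠ 0 ∧ monomial (mo.degree g) (1 : F) ∣ monomial (mo.degree f) 1 := by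
  have hlam0 := lam_ne_zero hp hlam
  by_cases hM : Reducible lam (mo.degree f)
  · obtain ⟨e, he, heM⟩ := hM.exists_monomialGens_le hp hlam
    refine ⟨monomial e 1, mem_GSet_iff.2 (Or.inr ⟨e, he, rfl⟩),
      monomial_eq_zero.not.2 one_ne_zero, ?_⟩
    classical
    rw [mo.degree_monomial, if_neg one_ne_zero]
    exact monomial_dvd_monomial.2 ⟨Or.inr heM, dvd_rfl⟩
  obtain ⟨N, hNM, hNlt⟩ := exists_lt_mem_swapClass hlam0 mo hf hf0 hM
  obtain ⟨b, hbM, hwb, hNb⟩ := exists_add_eq_of_mem_swapClass hlam0 hM hNM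
  have hb : mo.toSyn (swapExp b) < mo.toSyn b := by
    have h := congrArg mo.toSyn hNb
    rw [map_add, map_add] at h
    exact lt_of_add_lt_add_left (h.symm.trans_lt (add_lt_add_of_lt_of_le hNlt le_rfl))
  obtain ⟨c, hcb, hwc, hdeg, hc⟩ := exists_le_swapExp_lt hp hlam mo hwb hb
  have hσc : swapExp c ≠ c := fun h => hc.ne (by rw [h])
  refine ⟨monomial c 1 + monomial (swapExp c) 1, mem_GSet_iff.2 (Or.inl ⟨c, hwc, hdeg, hσc, rfl⟩),
    monomial_add_monomial_swapExp_ne_zero hσc, ?_⟩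
  rw [degree_monomial_add_monomial_swapExp mo hc]
  exact monomial_dvd_monomial.2 ⟨Or.inr (hcb.trans hbM), dvd_rfl⟩

end RootsOfUnity

end DihedralGroebner

open DihedralGroebner in
theorem GSet_isUniversalGroebnerBasis_general
    {F : Type*} [Field F] [CharP F 2] {r s p : ℕ} (hp : p.Prime)
    (lam : Fin r → F) (hlam : ∀ i, lam i ^ p = 1 ∧ lam i ≠ 1)
    (mo : MonomialOrder (DVar r s)) :
    Ideal.span (GSet F r s p lam) = HilbertIdeal F r s lam ∧
    ∀ f ∈ HilbertIdeal F r s lam, f ≠ 0 →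
      ∃ g ∈ GSet F r s p lam, g ≠ 0 ∧
        (monomial (lmExp mo g) 1 : MvPolynomial (DVar r s) F) ∣ monomial (lmExp mo f) 1 := by
  have hlam' : ∀ i, lam i ^ p = 1 := fun i => (hlam i).1
  have hspan := span_GSet_eq_hilbertIdeal (s := s) hp.pos hlam'
  refine ⟨hspan, fun f hf hf0 => ?_⟩
  rw [← hspan] at hf
  exact exists_mem_GSet_degree_dvd hp.pos hlam' mo hf hf0

/-- For `p` an odd prime, the set `𝒢` is a universal Gröbner basis of the
Hilbert ideal `I_H`: for every monomial order, `𝒢` generates `I_H` and the leading monomial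
of every nonzero `f ∈ I_H` is divisible by the leading monomial of some `g ∈ 𝒢`. -/
theorem GSet_isUniversalGroebnerBasis
    {F : Type*} [Field F] [CharP F 2] {r s p : ℕ} (hp : p.Prime) (hodd : Odd p)
    (ζ : F) (hζ : IsPrimitiveRoot ζ p)
    (lam : Fin r → F) (hlam : ∀ i, lam i ^ p = 1 ∧ lam i ≠ 1)
    (mo : MonomialOrder (DVar r s)) :
    Ideal.span (GSet F r s p lam) = HilbertIdeal F r s lam ∧
    ∀ f ∈ HilbertIdeal F r s lam, f ≠ 0 →
      ∃ g ∈ GSet F r s p lam, g ≠ 0 ∧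
        (monomial (lmExp mo g) 1 : MvPolynomial (DVar r s) F) ∣ monomial (lmExp mo f) 1 :=
  GSet_isUniversalGroebnerBasis_general hp lam hlam mo
end
end

section
/- Let p be an odd prime. Every element of the set 𝒢 lies in the Hilbert ideal I_H, and the ideal of R generated by 𝒢 equals I_H. -/
/-!
Everything is checked monomial by monomial, in characteristic two. For a `ρ`-invariant monomial
`m`, the orbit sum `m + σ m` is invariant, and `u * m = u * (m + σ m) + u * σ m` with
`u * σ u ∣ u * σ m`; so `𝒢` lies in the Hilbert ideal. Conversely, the terms of an invariant `f`
pair up along `σ`-orbits, and a `σ`-fixed monomial is a multiple of some `x_i y_i` or `z_j w_j`;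
so it suffices that every orbit sum `m + σ m` lies in the ideal generated by `𝒢`. For `deg m ≤ p`
it is in `𝒢`. A `ρ`-invariant `m` of larger degree has, by pigeonhole on the prefix products of
its `ρ`-eigenvalues in the group of `p`-th roots of unity, a `ρ`-invariant factor `m₁` of degree
at most `p`, and writing `m = m₁ m₂`, the identity
`m + σ m = (m₁ + σ m₁) m₂ + σ m₁ (m₂ + σ m₂)` lowers the degree.
-/

open MvPolynomial

noncomputable section

section ZeroSum

variable {V G : Type*} [CommGroup G] [Finite G]

theorem Multiset.exists_le_card_le_prod_map_eq_one (w : V → G) (s : Multiset V)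
    (hs : Nat.card G ≤ Multiset.card s) :
    ∃ t ≤ s, t ≠ 0 ∧ Multiset.card t ≤ Nat.card G ∧ (t.map w).prod = 1 := by
  have := Fintype.ofFinite G
  induction s using Quotient.inductionOn with | _ l => ?_
  simp only [Multiset.quot_mk_to_coe, Multiset.coe_card, Nat.card_eq_fintype_card] at hs ⊢
  let prefixProd : Fin (Fintype.card G + 1) → G := fun k => ((l.take k).map w).prod
  obtain ⟨i, j, hij, hprod⟩ := Fintype.exists_ne_map_eq_of_card_lt prefixProd (by simp)
  wlog hlt : i < j generalizing i j
  · exact this j i hij.symm hprod.symm (hij.lt_or_gt.resolve_left hlt)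
  have hj : (j : ℕ) ≤ Fintype.card G := Nat.lt_succ_iff.1 j.2
  have hij' : (i : ℕ) < j := hlt
  have hsplit : ((l.take j).map w).prod
      = ((l.take i).map w).prod * (((l.take j).drop i).map w).prod := by
    conv_lhs => rw [← List.take_append_drop i (l.take j), List.take_take,
      min_eq_left hij'.le]
    rw [List.map_append, List.prod_append]
  refine ⟨↑((l.take j).drop i), Multiset.coe_le.2 ((List.drop_sublist _ _).trans
    (List.take_sublist _ _)).subperm, ?_, ?_, ?_⟩
  · rw [Ne, Multiset.coe_eq_zero, ← List.length_eq_zero_iff]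
    simp only [List.length_drop, List.length_take]
    omega
  · simp only [Multiset.coe_card, List.length_drop, List.length_take]
    omega
  · have hprod' : ((l.take j).map w).prod = ((l.take i).map w).prod := hprod.symm
    rwa [hsplit, mul_eq_left] at hprod'

theorem Finsupp.exists_le_degree_le_prod_pow_eq_one (w : V → G) (d : V →₀ ℕ)
    (hd : Nat.card G ≤ d.degree) :
    ∃ b ≤ d, b ≠ 0 ∧ b.degree ≤ Nat.card G ∧ (b.prod fun v k => w v ^ k) = 1 := by
  classical
  have hcard : ∀ b : V →₀ ℕ, Multiset.card (Finsupp.toMultiset b) = b.degree := fun b => by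
    rw [Finsupp.card_toMultiset, Finsupp.degree]; rfl
  have hprod : ∀ b : V →₀ ℕ,
      ((Finsupp.toMultiset b).map w).prod = b.prod fun v k => w v ^ k := fun b => by
    rw [Finsupp.toMultiset_map, Finsupp.prod_toMultiset,
      Finsupp.prod_mapDomain_index (fun _ => pow_zero _) (fun _ _ _ => pow_add _ _ _)]
  obtain ⟨t, hts, ht0, htG, ht1⟩ :=
    Multiset.exists_le_card_le_prod_map_eq_one w (Finsupp.toMultiset d) (by rwa [hcard])
  refine ⟨Multiset.toFinsupp t, ?_, ?_, ?_, ?_⟩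
  · rwa [← Finsupp.orderIsoMultiset.le_iff_le, Finsupp.coe_orderIsoMultiset,
      Multiset.toFinsupp_toMultiset]
  · simpa using ht0
  · rwa [← hcard, Multiset.toFinsupp_toMultiset]
  · rwa [← hprod, Multiset.toFinsupp_toMultiset]

end ZeroSum

theorem MvPolynomial.X_mul_X_dvd_monomial {σ R : Type*} [CommSemiring R] {v w : σ}
    (hvw : v ≠ w) {d : σ →₀ ℕ} (hv : d v ≠ 0) (hw : d w ≠ 0) (c : R) :
    X v * X w ∣ monomial d c := by
  classical
  rw [X, X, monomial_mul, one_mul, monomial_dvd_monomial]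
  refine ⟨Or.inr fun u => ?_, one_dvd c⟩
  simp only [Finsupp.add_apply, Finsupp.single_apply]
  split_ifs with hu hu' <;> subst_vars <;> first | omega | exact absurd rfl hvw

theorem mul_add_map_mul_of_charTwo {R H : Type*} [CommRing R] [CharP R 2] [FunLike H R R]
    [RingHomClass H R R] (φ : H) (x y : R) :
    x * y + φ (x * y) = (x + φ x) * y + φ x * (y + φ y) := by
  rw [map_mul]
  linear_combination (-(φ x * y)) * CharTwo.two_eq_zero (R := R)

section Dihedral

variable {F : Type*} [Field F] {r s : ℕ}

def rhoEigenvalue (lam : Fin r → F) (d : DVar r s →₀ ℕ) : F :=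
  d.prod fun v k => rhoCoeff lam v ^ k

theorem dswap_involutive : Function.Involutive (dswap : DVar r s → DVar r s) := by
  rintro ((i | i) | (j | j)) <;> rfl

theorem dswap_ne (v : DVar r s) : dswap v ≠ v := by
  rcases v with (i | i) | (j | j) <;> simp [dswap]

theorem mapDomain_dswap_apply (d : DVar r s →₀ ℕ) (v : DVar r s) :
    d.mapDomain dswap v = d (dswap v) := by
  conv_lhs => rw [← dswap_involutive v]
  exact Finsupp.mapDomain_apply dswap_involutive.injective d (dswap v)

theorem mapDomain_dswap_mapDomain_dswap (d : DVar r s →₀ ℕ) :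
    (d.mapDomain dswap).mapDomain dswap = d := by
  ext v
  rw [mapDomain_dswap_apply, mapDomain_dswap_apply, dswap_involutive]

theorem sigmaMap_X (v : DVar r s) : sigmaMap F r s (X v) = X (dswap v) :=
  rename_X _ _

theorem sigmaMap_monomial (d : DVar r s →₀ ℕ) (c : F) :
    sigmaMap F r s (monomial d c) = monomial (d.mapDomain dswap) c :=
  rename_monomial _ _ _

theorem sigmaMap_sigmaMap (f : MvPolynomial (DVar r s) F) :
    sigmaMap F r s (sigmaMap F r s f) = f := by
  simp only [sigmaMap, rename_rename, dswap_involutive.comp_self, rename_id_apply]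

theorem coeff_mapDomain_dswap_of_sigmaMap_eq {f : MvPolynomial (DVar r s) F}
    (hf : sigmaMap F r s f = f) (d : DVar r s →₀ ℕ) :
    coeff (d.mapDomain dswap) f = coeff d f := by
  conv_lhs => rw [← hf]
  exact coeff_rename_mapDomain _ dswap_involutive.injective f d

theorem rhoCoeff_dswap (lam : Fin r → F) (v : DVar r s) :
    rhoCoeff lam (dswap v) = (rhoCoeff lam v)⁻¹ := by
  rcases v with (i | i) | (j | j) <;> simp [dswap, rhoCoeff]

theorem rhoCoeff_ne_zero {lam : Fin r → F} (hlam : ∀ i, lam i ≠ 0) (v : DVar r s) :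
    rhoCoeff lam v ≠ 0 := by
  rcases v with (i | i) | (j | j) <;> simp [rhoCoeff, hlam]

theorem rhoCoeff_pow_eq_one {p : ℕ} {lam : Fin r → F} (hlam : ∀ i, lam i ^ p = 1)
    (v : DVar r s) : rhoCoeff lam v ^ p = 1 := by
  rcases v with (i | i) | (j | j) <;> simp [rhoCoeff, hlam]

theorem rhoMap_X (lam : Fin r → F) (v : DVar r s) :
    rhoMap F r s lam (X v) = C (rhoCoeff lam v) * X v :=
  aeval_X _ _

theorem rhoEigenvalue_add (lam : Fin r → F) (d e : DVar r s →₀ ℕ) :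
    rhoEigenvalue lam (d + e) = rhoEigenvalue lam d * rhoEigenvalue lam e :=
  Finsupp.prod_add_index' (fun _ => pow_zero _) (fun _ _ _ => pow_add _ _ _)

theorem rhoEigenvalue_mapDomain_dswap (lam : Fin r → F) (d : DVar r s →₀ ℕ) :
    rhoEigenvalue lam (d.mapDomain dswap) = (rhoEigenvalue lam d)⁻¹ := by
  rw [rhoEigenvalue, rhoEigenvalue, Finsupp.prod_mapDomain_index_inj dswap_involutive.injective]
  simp only [Finsupp.prod, rhoCoeff_dswap, inv_pow, Finset.prod_inv_distrib]

theorem rhoMap_monomial (lam : Fin r → F) (d : DVar r s →₀ ℕ) (c : F) :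
    rhoMap F r s lam (monomial d c) = monomial d (c * rhoEigenvalue lam d) := by
  rw [rhoMap, aeval_monomial, algebraMap_eq, monomial_eq, C_mul, rhoEigenvalue,
    map_finsuppProd, mul_assoc]
  simp only [mul_pow, Finsupp.prod_mul, map_pow]

theorem coeff_rhoMap (lam : Fin r → F) (f : MvPolynomial (DVar r s) F) (d : DVar r s →₀ ℕ) :
    coeff d (rhoMap F r s lam f) = rhoEigenvalue lam d * coeff d f := by
  classical
  induction f using MvPolynomial.induction_on' with
  | monomial e c =>
    rw [rhoMap_monomial, coeff_monomial, coeff_monomial]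
    split_ifs with h
    · rw [h, mul_comm]
    · rw [mul_zero]
  | add f g hf hg => rw [map_add, coeff_add, coeff_add, hf, hg, mul_add]

theorem rhoEigenvalue_eq_one_of_mem_support {lam : Fin r → F} {f : MvPolynomial (DVar r s) F}
    (hf : rhoMap F r s lam f = f) {d : DVar r s →₀ ℕ} (hd : d ∈ f.support) :
    rhoEigenvalue lam d = 1 := by
  have h := coeff_rhoMap lam f d
  rwa [hf, eq_comm, mul_eq_right₀ (mem_support_iff.1 hd)] at h

theorem rhoMap_monomial_one_eq_self_iff {lam : Fin r → F} {d : DVar r s →₀ ℕ} :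
    rhoMap F r s lam (monomial d 1) = monomial d 1 ↔ rhoEigenvalue lam d = 1 := by
  rw [rhoMap_monomial, one_mul, monomial_eq_monomial_iff]
  simp

end Dihedral

section HilbertIdeal

variable {F : Type*} [Field F] {r s : ℕ}

theorem X_mul_X_dswap_mem_hilbertIdeal {lam : Fin r → F} (hlam : ∀ i, lam i ≠ 0)
    (v : DVar r s) : X v * X (dswap v) ∈ HilbertIdeal F r s lam := by
  refine Ideal.subset_span ⟨?_, ?_, ?_⟩
  · rw [map_mul, sigmaMap_X, sigmaMap_X, dswap_involutive, mul_comm]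
  · rw [map_mul, rhoMap_X, rhoMap_X, rhoCoeff_dswap, mul_mul_mul_comm, ← C_mul,
      mul_inv_cancel₀ (rhoCoeff_ne_zero hlam v), C_1, one_mul]
  · simp

theorem monomial_add_sigmaMap_mem_hilbertIdeal [CharP F 2] {lam : Fin r → F}
    {d : DVar r s →₀ ℕ} (hd : rhoEigenvalue lam d = 1) :
    monomial d (1 : F) + sigmaMap F r s (monomial d 1) ∈ HilbertIdeal F r s lam := by
  refine Ideal.subset_span ⟨?_, ?_, ?_⟩
  · rw [map_add, sigmaMap_sigmaMap, add_comm]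
  · rw [map_add, sigmaMap_monomial, rhoMap_monomial, rhoMap_monomial,
      rhoEigenvalue_mapDomain_dswap, hd, inv_one, mul_one]
  · rw [map_add, sigmaMap, constantCoeff_rename, CharTwo.add_self_eq_zero]

theorem X_mul_monomial_mem_hilbertIdeal [CharP F 2] {lam : Fin r → F} (hlam : ∀ i, lam i ≠ 0)
    {d : DVar r s →₀ ℕ} (hd : rhoEigenvalue lam d = 1) {v : DVar r s}
    (hv : X v ∣ monomial d (1 : F)) : X v * monomial d (1 : F) ∈ HilbertIdeal F r s lam := by
  set m : MvPolynomial (DVar r s) F := monomial d 1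
  have hsplit : X v * m = X v * (m + sigmaMap F r s m) + X v * sigmaMap F r s m := by
    linear_combination (-(X v * sigmaMap F r s m)) * CharTwo.two_eq_zero (R := MvPolynomial _ F)
  have hpair : X v * X (dswap v) ∣ X v * sigmaMap F r s m :=
    mul_dvd_mul_left _ (sigmaMap_X (F := F) v ▸ map_dvd _ hv)
  rw [hsplit]
  exact add_mem (Ideal.mul_mem_left _ _ (monomial_add_sigmaMap_mem_hilbertIdeal hd))
    (Ideal.mem_of_dvd _ hpair (X_mul_X_dswap_mem_hilbertIdeal hlam v))

theorem GSet_subset_hilbertIdeal [CharP F 2] {p : ℕ} {lam : Fin r → F}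
    (hlam : ∀ i, lam i ≠ 0) : GSet F r s p lam ⊆ HilbertIdeal F r s lam := by
  rintro g ((⟨_, ⟨d, rfl⟩, hρ, -, -, rfl⟩ | ⟨_, v, ⟨d, rfl⟩, hρ, -, hv, rfl⟩) |
    ⟨i, rfl⟩ | ⟨j, rfl⟩)
  · exact monomial_add_sigmaMap_mem_hilbertIdeal (rhoMap_monomial_one_eq_self_iff.1 hρ)
  · exact X_mul_monomial_mem_hilbertIdeal hlam (rhoMap_monomial_one_eq_self_iff.1 hρ) hv
  · exact X_mul_X_dswap_mem_hilbertIdeal hlam (.inl (.inl i))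
  · exact X_mul_X_dswap_mem_hilbertIdeal hlam (.inr (.inl j))

theorem X_mul_X_dswap_mem_span_GSet (p : ℕ) (lam : Fin r → F) (v : DVar r s) :
    X v * X (dswap v) ∈ Ideal.span (GSet F r s p lam) := by
  refine Ideal.subset_span (Or.inr ?_)
  rcases v with (i | i) | (j | j)
  exacts [.inl ⟨i, rfl⟩, .inl ⟨i, mul_comm _ _⟩, .inr ⟨j, rfl⟩, .inr ⟨j, mul_comm _ _⟩]

theorem monomial_mem_span_GSet_of_mapDomain_dswap_eq {p : ℕ} {lam : Fin r → F}
    {d : DVar r s →₀ ℕ} (hfix : d.mapDomain dswap = d) (hd : d ≠ 0) (c : F) :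
    monomial d c ∈ Ideal.span (GSet F r s p lam) := by
  obtain ⟨v, hv⟩ := Finsupp.ne_iff.1 hd
  have hv' : d (dswap v) ≠ 0 := by rwa [← mapDomain_dswap_apply, hfix]
  exact Ideal.mem_of_dvd _ (X_mul_X_dvd_monomial (dswap_ne v).symm hv hv' c)
    (X_mul_X_dswap_mem_span_GSet p lam v)

theorem exists_le_rhoEigenvalue_eq_one {p : ℕ} (hp : p ≠ 0) {lam : Fin r → F}
    (hlam : ∀ i, lam i ^ p = 1) {d : DVar r s →₀ ℕ} (hd : p ≤ d.degree) :
    ∃ b ≤ d, b ≠ 0 ∧ b.degree ≤ p ∧ rhoEigenvalue lam b = 1 := by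
  have : NeZero p := ⟨hp⟩
  let w : DVar r s → rootsOfUnity p F := fun v =>
    rootsOfUnity.mkOfPowEq _ (rhoCoeff_pow_eq_one hlam v)
  have hcard := card_rootsOfUnity F p
  obtain ⟨b, hbd, hb0, hbdeg, hb1⟩ :=
    Finsupp.exists_le_degree_le_prod_pow_eq_one w d (hcard.trans hd)
  refine ⟨b, hbd, hb0, hbdeg.trans hcard, ?_⟩
  have := congrArg ((Units.coeHom F).comp (rootsOfUnity p F).subtype) hb1
  simpa [map_finsuppProd, w, rhoEigenvalue] using this

theorem monomial_add_sigmaMap_mem_span_GSet [CharP F 2] {p : ℕ} (hp : p ≠ 0)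
    {lam : Fin r → F} (hlam : ∀ i, lam i ^ p = 1) {d : DVar r s →₀ ℕ}
    (hd : rhoEigenvalue lam d = 1) :
    monomial d (1 : F) + sigmaMap F r s (monomial d 1) ∈ Ideal.span (GSet F r s p lam) := by
  induction hn : d.degree using Nat.strong_induction_on generalizing d with | _ n ih => ?_
  by_cases hdeg : n ≤ p
  · by_cases hfix : sigmaMap F r s (monomial d 1) = monomial d 1
    · rw [hfix, CharTwo.add_self_eq_zero]
      exact zero_mem _
    · refine Ideal.subset_span (.inl (.inl ⟨_, ⟨d, rfl⟩, rhoMap_monomial_one_eq_self_iff.2 hd,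
        hfix, ?_, rfl⟩))
      rw [totalDegree_monomial _ one_ne_zero]
      change d.degree ≤ p
      omega
  · obtain ⟨b, hbd, hb0, hbp, hb⟩ :=
      exists_le_rhoEigenvalue_eq_one hp hlam (hn ▸ (not_le.1 hdeg).le)
    obtain ⟨c, rfl⟩ := exists_add_of_le hbd
    have hc : rhoEigenvalue lam c = 1 := by rwa [rhoEigenvalue_add, hb, one_mul] at hd
    have hnbc : n = b.degree + c.degree := hn ▸ map_add _ b c
    have hb_pos : 0 < b.degree := Nat.pos_of_ne_zero ((Finsupp.degree_eq_zero_iff b).not.2 hb0)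
    rw [← mul_one (1 : F), ← monomial_mul, mul_add_map_mul_of_charTwo]
    exact add_mem (Ideal.mul_mem_right _ _ (ih _ (by omega) hb rfl))
      (Ideal.mul_mem_left _ _ (ih _ (by omega) hc rfl))

theorem hilbertIdeal_le_span_GSet [CharP F 2] {p : ℕ} (hp : p ≠ 0) {lam : Fin r → F}
    (hlam : ∀ i, lam i ^ p = 1) : HilbertIdeal F r s lam ≤ Ideal.span (GSet F r s p lam) := by
  refine Ideal.span_le.2 fun f ⟨hσ, hρ, h0⟩ => ?_
  have hd0 : ∀ d ∈ f.support, d ≠ 0 := by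
    rintro d hd rfl
    exact mem_support_iff.1 hd (by rwa [← constantCoeff_eq])
  -- Modulo the span of `GSet`, the terms of `f` cancel in pairs along the `σ`-orbits of exponents.
  rw [SetLike.mem_coe, ← Ideal.Quotient.eq_zero_iff_mem, f.as_sum, map_sum]
  refine Finset.sum_involution (fun d _ => d.mapDomain dswap) (fun d hd => ?_)
    (fun d hd hne hfix => hne ?_) (fun d hd => ?_) (fun d _ => mapDomain_dswap_mapDomain_dswap d)
  · have hpair : monomial d (coeff d f) + monomial (d.mapDomain dswap) (coeff d f)
        = C (coeff d f) * (monomial d 1 + sigmaMap F r s (monomial d 1)) := by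
      rw [sigmaMap_monomial, mul_add, C_mul_monomial, C_mul_monomial, mul_one]
    rw [← map_add, Ideal.Quotient.eq_zero_iff_mem, coeff_mapDomain_dswap_of_sigmaMap_eq hσ,
      hpair]
    exact Ideal.mul_mem_left _ _ (monomial_add_sigmaMap_mem_span_GSet hp hlam
      (rhoEigenvalue_eq_one_of_mem_support hρ hd))
  · exact Ideal.Quotient.eq_zero_iff_mem.2
      (monomial_mem_span_GSet_of_mapDomain_dswap_eq hfix (hd0 d hd) _)
  · rw [mem_support_iff, coeff_mapDomain_dswap_of_sigmaMap_eq hσ]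
    exact mem_support_iff.1 hd

end HilbertIdeal

theorem GSet_subset_and_span_eq_hilbertIdeal_general
    {F : Type*} [Field F] [CharP F 2] {r s p : ℕ} (hp : p.Prime)
    (lam : Fin r → F) (hlam : ∀ i, lam i ^ p = 1 ∧ lam i ≠ 1) :
    (∀ g ∈ GSet F r s p lam, g ∈ HilbertIdeal F r s lam) ∧
    Ideal.span (GSet F r s p lam) = HilbertIdeal F r s lam := by
  have hlam_ne_zero : ∀ i, lam i ≠ 0 := fun i h0 => by
    simpa [h0, zero_pow hp.ne_zero] using (hlam i).1
  have hsub := GSet_subset_hilbertIdeal (s := s) (p := p) hlam_ne_zero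
  exact ⟨hsub, le_antisymm (Ideal.span_le.2 hsub)
    (hilbertIdeal_le_span_GSet hp.ne_zero fun i => (hlam i).1)⟩

/-- For `p` an odd prime, every element of `𝒢` lies in the Hilbert ideal `I_H`,
and the ideal generated by `𝒢` equals `I_H`. -/
theorem GSet_subset_and_span_eq_hilbertIdeal
    {F : Type*} [Field F] [CharP F 2] {r s p : ℕ} (hp : p.Prime) (hodd : Odd p)
    (ζ : F) (hζ : IsPrimitiveRoot ζ p)
    (lam : Fin r → F) (hlam : ∀ i, lam i ^ p = 1 ∧ lam i ≠ 1) :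
    (∀ g ∈ GSet F r s p lam, g ∈ HilbertIdeal F r s lam) ∧
    Ideal.span (GSet F r s p lam) = HilbertIdeal F r s lam :=
  GSet_subset_and_span_eq_hilbertIdeal_general hp lam hlam
end
end

section
/- Let p be an odd prime. The top degree of the coinvariant ring R/I_H equals s + max(r, p) if r ≥ 1, and equals s if r = 0. -/
open MvPolynomial

noncomputable section

-- ================= auxiliary development =================

section Aux

variable {r s : ℕ}

lemma dswap_dswap (v : DVar r s) : dswap (dswap v) = v := by
  rcases v with (i|i)|(j|j) <;> rfl

lemma dswap_inj : Function.Injective (dswap (r := r) (s := s)) :=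
  Function.LeftInverse.injective dswap_dswap

/-- swap on exponent vectors -/
def sw (d : DVar r s →₀ ℕ) : DVar r s →₀ ℕ := Finsupp.mapDomain dswap d

lemma sw_apply (d : DVar r s →₀ ℕ) (v : DVar r s) : sw d v = d (dswap v) := by
  conv_lhs => rw [← dswap_dswap v]
  exact Finsupp.mapDomain_apply dswap_inj d (dswap v)

lemma sw_sw (d : DVar r s →₀ ℕ) : sw (sw d) = d := by
  rw [sw, sw, ← Finsupp.mapDomain_comp]
  have : dswap ∘ dswap = (id : DVar r s → DVar r s) := funext dswap_dswap
  rw [this, Finsupp.mapDomain_id]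

lemma sw_add (d e : DVar r s →₀ ℕ) : sw (d + e) = sw d + sw e :=
  Finsupp.mapDomain_add

lemma sw_single (v : DVar r s) (n : ℕ) :
    sw (Finsupp.single v n) = Finsupp.single (dswap v) n :=
  Finsupp.mapDomain_single

lemma sw_zero : sw (0 : DVar r s →₀ ℕ) = 0 := Finsupp.mapDomain_zero

lemma sw_eq_iff {d e : DVar r s →₀ ℕ} : sw d = e ↔ d = sw e := by
  constructor
  · rintro rfl; rw [sw_sw]
  · rintro rfl; rw [sw_sw]

variable {F : Type*} [Field F]

lemma sigma_monomial (d : DVar r s →₀ ℕ) (c : F) :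
    sigmaMap F r s (monomial d c) = monomial (sw d) c :=
  rename_monomial _ _ _

lemma coeff_sigma (f : MvPolynomial (DVar r s) F) (d : DVar r s →₀ ℕ) :
    coeff (sw d) (sigmaMap F r s f) = coeff d f :=
  coeff_rename_mapDomain _ dswap_inj _ _

/-- the exponent of `ζ` attached to each variable -/
def kap (p : ℕ) (k : Fin r → ℕ) : DVar r s → ℕ
  | .inl (.inl i) => k i
  | .inl (.inr i) => k i * (p - 1)
  | .inr _ => 0

/-- additive weight of an exponent vector -/
def Mwt (p : ℕ) (k : Fin r → ℕ) (d : DVar r s →₀ ℕ) : ℕ :=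
  d.sum fun v n => n * kap p k v

lemma Mwt_add (p : ℕ) (k : Fin r → ℕ) (d e : DVar r s →₀ ℕ) :
    Mwt p k (d + e) = Mwt p k d + Mwt p k e := by
  unfold Mwt
  rw [Finsupp.sum_add_index]
  · intro v _; rw [zero_mul]
  · intro v _ n m; rw [add_mul]

lemma Mwt_single (p : ℕ) (k : Fin r → ℕ) (v : DVar r s) (n : ℕ) :
    Mwt p k (Finsupp.single v n) = n * kap p k v := by
  unfold Mwt
  rw [Finsupp.sum_single_index]
  rw [zero_mul]

lemma kap_add_kap_dswap (p : ℕ) (hp : 0 < p) (k : Fin r → ℕ) (v : DVar r s) :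
    p ∣ kap p k v + kap p k (dswap v) := by
  rcases v with (i|i)|(j|j) <;> simp only [dswap, kap]
  · refine ⟨k i, ?_⟩
    have : 1 + (p - 1) = p := by omega
    calc k i + k i * (p-1) = k i * (1 + (p-1)) := by ring
    _ = p * k i := by rw [this]; ring
  · refine ⟨k i, ?_⟩
    have : 1 + (p - 1) = p := by omega
    calc k i * (p-1) + k i = k i * (1 + (p-1)) := by ring
    _ = p * k i := by rw [this]; ring
  · simp
  · simp

lemma Mwt_fintype (p : ℕ) (k : Fin r → ℕ) (d : DVar r s →₀ ℕ) :
    Mwt p k d = ∑ v : DVar r s, d v * kap p k v := by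
  unfold Mwt
  exact Finsupp.sum_fintype _ _ (fun v => by rw [zero_mul])

def dswapEquiv : Equiv (DVar r s) (DVar r s) := ⟨dswap, dswap, dswap_dswap, dswap_dswap⟩

lemma Mwt_add_Mwt_sw (p : ℕ) (hp : 0 < p) (k : Fin r → ℕ) (d : DVar r s →₀ ℕ) :
    p ∣ Mwt p k d + Mwt p k (sw d) := by
  rw [Mwt_fintype, Mwt_fintype]
  have h2 : ∑ v : DVar r s, sw d v * kap p k v
      = ∑ v : DVar r s, d v * kap p k (dswap v) := by
    apply Fintype.sum_equiv (dswapEquiv (r := r) (s := s))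
    intro v
    rw [sw_apply]
    show d (dswap v) * kap p k v = d (dswap v) * kap p k (dswap (dswap v))
    rw [dswap_dswap]
  rw [h2, ← Finset.sum_add_distrib]
  apply Finset.dvd_sum
  intro v _
  have : d v * kap p k v + d v * kap p k (dswap v) = d v * (kap p k v + kap p k (dswap v)) := by ring
  rw [this]
  exact Dvd.dvd.mul_left (kap_add_kap_dswap p hp k v) _

end Aux

section Rho

variable {r s : ℕ} {F : Type*} [Field F]
variable {p : ℕ} {ζ : F} {k : Fin r → ℕ} {lam : Fin r → F}

lemma rhoCoeff_eq (hp : 0 < p) (hζ : IsPrimitiveRoot ζ p) (hk : ∀ i, lam i = ζ ^ k i)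
    (v : DVar r s) : rhoCoeff lam v = ζ ^ kap p k v := by
  rcases v with (i|i)|(j|j)
  · exact hk i
  · show (lam i)⁻¹ = ζ ^ (k i * (p-1))
    rw [hk i]
    refine inv_eq_of_mul_eq_one_right ?_
    rw [← pow_add]
    have : k i + k i * (p - 1) = p * k i := by
      have h1 : 1 + (p - 1) = p := by omega
      calc k i + k i * (p-1) = k i * (1 + (p-1)) := by ring
      _ = p * k i := by rw [h1]; ring
    rw [this, pow_mul, hζ.pow_eq_one, one_pow]
  · simp [rhoCoeff, kap]
  · simp [rhoCoeff, kap]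

lemma rho_monomial (hp : 0 < p) (hζ : IsPrimitiveRoot ζ p) (hk : ∀ i, lam i = ζ ^ k i)
    (d : DVar r s →₀ ℕ) (c : F) :
    rhoMap F r s lam (monomial d c) = C (ζ ^ Mwt p k d) * monomial d c := by
  unfold rhoMap
  rw [aeval_monomial]
  have h1 : (d.prod fun v e => (C (rhoCoeff lam v) * X v : MvPolynomial (DVar r s) F) ^ e)
      = C (ζ ^ Mwt p k d) * d.prod fun v e => (X v : MvPolynomial (DVar r s) F) ^ e := by
    unfold Finsupp.prod
    calc ∏ v ∈ d.support, (C (rhoCoeff lam v) * X v : MvPolynomial (DVar r s) F) ^ d v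
        = ∏ v ∈ d.support, (C (rhoCoeff lam v) ^ d v * (X v : MvPolynomial (DVar r s) F) ^ d v) :=
          Finset.prod_congr rfl (fun v _ => mul_pow _ _ _)
      _ = (∏ v ∈ d.support, (C (rhoCoeff lam v) : MvPolynomial (DVar r s) F) ^ d v)
            * ∏ v ∈ d.support, (X v : MvPolynomial (DVar r s) F) ^ d v :=
          Finset.prod_mul_distrib
      _ = C (ζ ^ Mwt p k d) * ∏ v ∈ d.support, (X v : MvPolynomial (DVar r s) F) ^ d v := by
          congr 1
          rw [Finset.prod_congr rfl (fun v _ => (map_pow C (rhoCoeff lam v) (d v)).symm),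
            ← map_prod C (fun v => rhoCoeff lam v ^ d v) d.support]
          congr 1
          calc ∏ v ∈ d.support, rhoCoeff lam v ^ d v
              = ∏ v ∈ d.support, ζ ^ (d v * kap p k v) := by
                refine Finset.prod_congr rfl (fun v _ => ?_)
                rw [rhoCoeff_eq hp hζ hk, ← pow_mul, mul_comm (kap p k v)]
            _ = ζ ^ ∑ v ∈ d.support, d v * kap p k v := Finset.prod_pow_eq_pow_sum _ _ _
            _ = ζ ^ Mwt p k d := rfl
  rw [h1, monomial_eq, algebraMap_eq]
  unfold Finsupp.prod
  ring

lemma coeff_rho (hp : 0 < p) (hζ : IsPrimitiveRoot ζ p) (hk : ∀ i, lam i = ζ ^ k i)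
    (f : MvPolynomial (DVar r s) F) (d : DVar r s →₀ ℕ) :
    coeff d (rhoMap F r s lam f) = ζ ^ Mwt p k d * coeff d f := by
  conv_lhs => rw [f.as_sum, map_sum]
  rw [coeff_sum]
  have h : ∀ m ∈ f.support, coeff d (rhoMap F r s lam (monomial m (coeff m f)))
      = if m = d then ζ ^ Mwt p k m * coeff m f else 0 := by
    intro m _
    rw [rho_monomial hp hζ hk, coeff_C_mul, coeff_monomial]
    split_ifs
    · rfl
    · exact mul_zero _
  rw [Finset.sum_congr rfl h,
    Finset.sum_ite_eq' f.support d (fun m => ζ ^ Mwt p k m * coeff m f)]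
  split_ifs with hmem
  · rfl
  · rw [notMem_support_iff.mp hmem, mul_zero]

lemma dvd_Mwt_of_mem_support (hp : 0 < p) (hζ : IsPrimitiveRoot ζ p)
    (hk : ∀ i, lam i = ζ ^ k i) {f : MvPolynomial (DVar r s) F}
    (hf : rhoMap F r s lam f = f) {d : DVar r s →₀ ℕ} (hd : coeff d f ≠ 0) :
    p ∣ Mwt p k d := by
  have h := coeff_rho hp hζ hk f d
  rw [hf] at h
  have h2 : ζ ^ Mwt p k d = 1 := by
    by_contra hne
    exact hne (mul_right_cancel₀ hd (h.symm.trans (one_mul _).symm))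
  exact (hζ.pow_eq_one_iff_dvd _).mp h2

lemma coeff_sigma_invariant {f : MvPolynomial (DVar r s) F}
    (hf : sigmaMap F r s f = f) (d : DVar r s →₀ ℕ) :
    coeff (sw d) f = coeff d f := by
  conv_lhs => rw [← hf]
  exact coeff_sigma f d

end Rho

section Members

variable {r s : ℕ} {F : Type*} [Field F]
variable {p : ℕ} {ζ : F} {k : Fin r → ℕ} {lam : Fin r → F}

lemma mem_hilbert_of_invariant {f : MvPolynomial (DVar r s) F}
    (h1 : sigmaMap F r s f = f) (h2 : rhoMap F r s lam f = f)
    (h3 : constantCoeff f = 0) : f ∈ HilbertIdeal F r s lam :=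
  Ideal.subset_span ⟨h1, h2, h3⟩

/-- orbit sums of weight-0 monomials lie in the Hilbert ideal -/
lemma orbit_mem (hp : 0 < p) (hζ : IsPrimitiveRoot ζ p) (hk : ∀ i, lam i = ζ ^ k i)
    {d : DVar r s →₀ ℕ} (hw : p ∣ Mwt p k d) (hd : d ≠ 0) :
    (monomial d 1 + monomial (sw d) 1 : MvPolynomial (DVar r s) F)
      ∈ HilbertIdeal F r s lam := by
  have hwsw : p ∣ Mwt p k (sw d) :=
    (Nat.dvd_add_right hw).mp (Mwt_add_Mwt_sw p hp k d)
  refine mem_hilbert_of_invariant ?_ ?_ ?_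
  · rw [map_add, sigma_monomial, sigma_monomial, sw_sw, add_comm]
  · rw [map_add, rho_monomial hp hζ hk, rho_monomial hp hζ hk]
    rw [hζ.pow_eq_one_iff_dvd _ |>.mpr hw, hζ.pow_eq_one_iff_dvd _ |>.mpr hwsw]
    rw [map_one, one_mul, one_mul]
  · have hsd : sw d ≠ 0 := by
      intro h
      apply hd
      rw [← sw_sw d, h, sw_zero]
    rw [map_add, constantCoeff_monomial, constantCoeff_monomial,
      if_neg hd, if_neg hsd, add_zero]

lemma fix_mem (hp : 0 < p) (hζ : IsPrimitiveRoot ζ p) (hk : ∀ i, lam i = ζ ^ k i)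
    {d : DVar r s →₀ ℕ} (hw : p ∣ Mwt p k d) (hfix : sw d = d) (hd : d ≠ 0) :
    (monomial d 1 : MvPolynomial (DVar r s) F) ∈ HilbertIdeal F r s lam := by
  refine mem_hilbert_of_invariant ?_ ?_ ?_
  · rw [sigma_monomial, hfix]
  · rw [rho_monomial hp hζ hk, hζ.pow_eq_one_iff_dvd _ |>.mpr hw, map_one, one_mul]
  · rw [constantCoeff_monomial, if_neg hd]

/-- divisibility: if a "submonomial" is in the ideal so is the monomial -/
lemma mono_mem_of_le {d e : DVar r s →₀ ℕ} (hle : e ≤ d)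
    (h : (monomial e 1 : MvPolynomial (DVar r s) F) ∈ HilbertIdeal F r s lam) :
    (monomial d 1 : MvPolynomial (DVar r s) F) ∈ HilbertIdeal F r s lam := by
  have : (monomial d 1 : MvPolynomial (DVar r s) F)
      = monomial (d - e) 1 * monomial e 1 := by
    rw [monomial_mul, one_mul, tsub_add_cancel_of_le hle]
  rw [this]
  exact Ideal.mul_mem_left _ _ h

/-- the pair monomial x_i y_i (or z_j w_j) -/
lemma pair_mem (hp : 0 < p) (hζ : IsPrimitiveRoot ζ p) (hk : ∀ i, lam i = ζ ^ k i)
    (v : DVar r s) {d : DVar r s →₀ ℕ}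
    (h1 : 1 ≤ d v) (h2 : 1 ≤ d (dswap v)) :
    (monomial d 1 : MvPolynomial (DVar r s) F) ∈ HilbertIdeal F r s lam := by
  set e : DVar r s →₀ ℕ := Finsupp.single v 1 + Finsupp.single (dswap v) 1 with he
  have hvne : v ≠ dswap v := by
    rcases v with (i|i)|(j|j) <;> simp [dswap]
  refine mono_mem_of_le (e := e) ?_ (fix_mem hp hζ hk ?_ ?_ ?_)
  · intro u
    rcases eq_or_ne u v with rfl | huv
    · simpa [he, Finsupp.single_apply, hvne, hvne.symm] using h1
    rcases eq_or_ne u (dswap v) with rfl | huw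
    · simpa [he, Finsupp.single_apply, hvne, hvne.symm, huv] using h2
    · simp [he, Finsupp.single_apply, Ne.symm huv, Ne.symm huw]
  · rw [he, Mwt_add, Mwt_single, Mwt_single, one_mul, one_mul]
    exact kap_add_kap_dswap p hp k v
  · rw [he, sw_add, sw_single, sw_single, dswap_dswap, add_comm]
  · rw [he]
    intro h
    have := DFunLike.congr_fun h v
    simp [Finsupp.single_apply, hvne] at this
end Members

section Members2

variable {r s : ℕ} {F : Type*} [Field F]
variable {p : ℕ} {ζ : F} {k : Fin r → ℕ} {lam : Fin r → F}

lemma single_mono_mul (v : DVar r s) (n m : ℕ) :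
    (monomial (Finsupp.single v n) 1 * monomial (Finsupp.single v m) 1 :
      MvPolynomial (DVar r s) F) = monomial (Finsupp.single v (n+m)) 1 := by
  rw [monomial_mul, one_mul, ← Finsupp.single_add]

/-- squares of z/w-type variables -/
lemma zwsq_mem (hp : 0 < p) (hζ : IsPrimitiveRoot ζ p) (hk : ∀ i, lam i = ζ ^ k i)
    (v : DVar r s) (hv : p ∣ kap p k v) {d : DVar r s →₀ ℕ} (hd : 2 ≤ d v) :
    (monomial d 1 : MvPolynomial (DVar r s) F) ∈ HilbertIdeal F r s lam := by
  refine mono_mem_of_le (e := Finsupp.single v 2) ?_ ?_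
  · exact Finsupp.single_le_iff.mpr hd
  have hid : (monomial (Finsupp.single v 2) 1 : MvPolynomial (DVar r s) F)
      = monomial (Finsupp.single v 1) 1 *
          (monomial (Finsupp.single v 1) 1 + monomial (Finsupp.single (dswap v) 1) 1)
        - monomial (Finsupp.single v 1 + Finsupp.single (dswap v) 1) 1 := by
    rw [mul_add, single_mono_mul, monomial_mul, one_mul]
    show (monomial (Finsupp.single v 2) 1 : MvPolynomial (DVar r s) F) = _ + _ - _
    ring_nf
  rw [hid]
  refine Ideal.sub_mem _ (Ideal.mul_mem_left _ _ ?_) ?_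
  · have := orbit_mem (lam := lam) hp hζ hk (d := Finsupp.single v 1)
      (by rw [Mwt_single, one_mul]; exact hv) (by simp)
    rwa [sw_single] at this
  · refine pair_mem hp hζ hk v ?_ ?_
    · have hne : v ≠ dswap v := by rcases v with (i|i)|(j|j) <;> simp [dswap]
      simp [Finsupp.single_apply, hne, hne.symm]
    · have hne : v ≠ dswap v := by rcases v with (i|i)|(j|j) <;> simp [dswap]
      simp [Finsupp.single_apply, hne, hne.symm]

/-- the key reduction step: replace a weight-zero submonomial by its swap -/
lemma reduce_mem (hp : 0 < p) (hζ : IsPrimitiveRoot ζ p) (hk : ∀ i, lam i = ζ ^ k i)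
    {d m₀ : DVar r s →₀ ℕ} (hle : m₀ ≤ d) (hw : p ∣ Mwt p k m₀) (hm0 : m₀ ≠ 0)
    (h : (monomial (d - m₀ + sw m₀) 1 : MvPolynomial (DVar r s) F) ∈ HilbertIdeal F r s lam) :
    (monomial d 1 : MvPolynomial (DVar r s) F) ∈ HilbertIdeal F r s lam := by
  have hid : (monomial d 1 : MvPolynomial (DVar r s) F)
      = monomial (d - m₀) 1 * (monomial m₀ 1 + monomial (sw m₀) 1)
        - monomial (d - m₀ + sw m₀) 1 := by
    rw [mul_add, monomial_mul, monomial_mul, one_mul, tsub_add_cancel_of_le hle]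
    ring_nf
  rw [hid]
  exact Ideal.sub_mem _ (Ideal.mul_mem_left _ _ (orbit_mem hp hζ hk hw hm0)) h

end Members2

section Cover

open Pointwise

variable {p : ℕ} [hpf : Fact p.Prime]

lemma closed_under_add_gen (S : Finset (ZMod p)) (hS : S.Nonempty) {c : ZMod p} (hc : c ≠ 0)
    (hcl : ∀ x ∈ S, x + c ∈ S) : ∀ z : ZMod p, z ∈ S := by
  haveI : NeZero p := ⟨hpf.out.ne_zero⟩
  obtain ⟨b, hb⟩ := hS
  have hk : ∀ n : ℕ, b + (n : ZMod p) * c ∈ S := by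
    intro n
    induction n with
    | zero => simpa using hb
    | succ n ih =>
        have h2 := hcl _ ih
        have : b + ((n : ℕ) + 1 : ZMod p) * c = b + (n : ZMod p) * c + c := by ring
        rw [Nat.cast_succ, this]
        exact h2
  intro z
  have := hk ((z - b) * c⁻¹).val
  rwa [ZMod.natCast_val, ZMod.cast_id, mul_assoc, inv_mul_cancel₀ hc, mul_one,
    add_sub_cancel] at this

/-- arithmetic progression `{0, c, ..., a•c}` -/
def AP (a : ℕ) (c : ZMod p) : Finset (ZMod p) :=
  (Finset.range (a+1)).image (fun j : ℕ => (j : ZMod p) * c)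

lemma mem_AP {a : ℕ} {c x : ZMod p} : x ∈ AP a c ↔ ∃ j ≤ a, (j : ZMod p) * c = x := by
  unfold AP
  simp only [Finset.mem_image, Finset.mem_range, Nat.lt_succ_iff]

lemma AP_mono {a b : ℕ} (h : a ≤ b) {c : ZMod p} : AP a c ⊆ AP b c := by
  intro x hx
  rw [mem_AP] at hx ⊢
  obtain ⟨j, hj, rfl⟩ := hx
  exact ⟨j, hj.trans h, rfl⟩

lemma AP_card (A : Finset (ZMod p)) (hA : A.Nonempty) {c : ZMod p} (hc : c ≠ 0) (a : ℕ) :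
    min p (A.card + a) ≤ (A + AP a c).card := by
  haveI : NeZero p := ⟨hpf.out.ne_zero⟩
  induction a with
  | zero =>
      have : A + AP 0 c = A := by
        have h0 : AP 0 c = {0} := by
          unfold AP
          simp
        rw [h0, Finset.add_singleton]
        ext x
        simp
      rw [this, Nat.add_zero]
      exact min_le_right _ _
  | succ a ih =>
      have hUsub : A + AP a c ⊆ A + AP (a+1) c :=
        Finset.add_subset_add_left (AP_mono (Nat.le_succ a))
      by_cases hcase : ∀ b ∈ A, b + ((a+1 : ℕ) : ZMod p) * c ∈ A + AP a c
      · -- closure case: A + AP a c is everything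
        have hne : (A + AP a c).Nonempty := by
          obtain ⟨b, hb⟩ := hA
          exact ⟨b + 0, Finset.add_mem_add hb (by rw [mem_AP]; exact ⟨0, Nat.zero_le _, by simp⟩)⟩
        have hcl : ∀ x ∈ A + AP a c, x + c ∈ A + AP a c := by
          intro x hx
          rw [Finset.mem_add] at hx
          obtain ⟨b, hb, y, hy, rfl⟩ := hx
          rw [mem_AP] at hy
          obtain ⟨j, hj, rfl⟩ := hy
          rcases Nat.lt_or_ge j a with hlt | hge
          · have heq : b + (j : ZMod p) * c + c = b + ((j+1 : ℕ) : ZMod p) * c := by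
              push_cast; ring
            rw [heq]
            refine Finset.add_mem_add hb ?_
            rw [mem_AP]
            exact ⟨j+1, hlt, rfl⟩
          · have hja : j = a := le_antisymm hj hge
            subst hja
            have : b + (j : ZMod p) * c + c = b + ((j+1 : ℕ) : ZMod p) * c := by
              push_cast; ring
            rw [this]
            exact hcase b hb
        have huniv : ∀ z : ZMod p, z ∈ A + AP a c :=
          closed_under_add_gen _ hne hc hcl
        have : (A + AP (a+1) c).card = p := by
          have he : A + AP (a+1) c = Finset.univ :=
            Finset.eq_univ_iff_forall.mpr (fun z => hUsub (huniv z))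
          rw [he, Finset.card_univ, ZMod.card]
        rw [this]
        exact min_le_left _ _
      · push_neg at hcase
        obtain ⟨b, hb, hbnot⟩ := hcase
        have hbmem : b + ((a+1 : ℕ) : ZMod p) * c ∈ A + AP (a+1) c :=
          Finset.add_mem_add hb (by rw [mem_AP]; exact ⟨a+1, le_refl _, rfl⟩)
        have hsub2 : insert (b + ((a+1 : ℕ) : ZMod p) * c) (A + AP a c) ⊆ A + AP (a+1) c := by
          intro x hx
          rcases Finset.mem_insert.mp hx with rfl | hx
          · exact hbmem
          · exact hUsub hx
        have hcard : (A + AP a c).card + 1 ≤ (A + AP (a+1) c).card := by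
          have := Finset.card_le_card hsub2
          rwa [Finset.card_insert_of_notMem hbnot] at this
        omega
  
lemma cover_exists {ι : Type*} [DecidableEq ι] (T : Finset ι) (a : ι → ℕ) (c : ι → ZMod p)
    (hc : ∀ i ∈ T, c i ≠ 0) (hsum : p ≤ 1 + ∑ i ∈ T, a i) (z : ZMod p) :
    ∃ α : ι → ℕ, (∀ i, α i ≤ a i) ∧ (∀ i ∉ T, α i = 0) ∧ z = ∑ i ∈ T, (α i : ZMod p) * c i := by
  haveI : NeZero p := ⟨hpf.out.ne_zero⟩
  suffices h : ∃ A : Finset (ZMod p),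
      (∀ x ∈ A, ∃ α : ι → ℕ, (∀ i, α i ≤ a i) ∧ (∀ i ∉ T, α i = 0) ∧
        x = ∑ i ∈ T, (α i : ZMod p) * c i) ∧ min p (1 + ∑ i ∈ T, a i) ≤ A.card by
    obtain ⟨A, hrep, hcard⟩ := h
    have hc1 : min p (1 + ∑ i ∈ T, a i) = p := min_eq_left hsum
    rw [hc1] at hcard
    have hAuniv : A = Finset.univ := by
      apply Finset.eq_univ_of_card
      refine le_antisymm (by simpa [ZMod.card] using Finset.card_le_univ A) ?_
      rwa [ZMod.card]
    exact hrep z (hAuniv ▸ Finset.mem_univ z)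
  clear hsum
  induction T using Finset.induction_on with
  | empty =>
      refine ⟨{0}, ?_, ?_⟩
      · intro x hx
        rw [Finset.mem_singleton] at hx
        exact ⟨fun _ => 0, fun i => Nat.zero_le _, fun i _ => rfl, by simp [hx]⟩
      · simp only [Finset.card_singleton, Finset.sum_empty]
        exact min_le_of_right_le (le_refl 1)
  | @insert i₀ T hi₀ ih =>
      obtain ⟨A, hrep, hcard⟩ := ih (fun i hi => hc i (Finset.mem_insert_of_mem hi))
      have hAne : A.Nonempty := by
        rw [← Finset.card_pos]
        have h1 : 0 < p := hpf.out.pos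
        omega
      refine ⟨A + AP (a i₀) (c i₀), ?_, ?_⟩
      · intro x hx
        rw [Finset.mem_add] at hx
        obtain ⟨y, hy, w, hw, rfl⟩ := hx
        rw [mem_AP] at hw
        obtain ⟨j, hj, rfl⟩ := hw
        obtain ⟨α, hαle, hαsupp, rfl⟩ := hrep y hy
        refine ⟨fun i => if i = i₀ then j else α i, ?_, ?_, ?_⟩
        · intro i
          dsimp only
          split_ifs with h
          · subst h; exact hj
          · exact hαle i
        · intro i hi
          have hii : i ≠ i₀ := by
            intro h
            subst h
            exact hi (Finset.mem_insert_self i T)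
          dsimp only
          rw [if_neg hii]
          exact hαsupp i (fun h => hi (Finset.mem_insert_of_mem h))
        · rw [Finset.sum_insert hi₀]
          dsimp only
          rw [if_pos rfl]
          have hT : ∀ i ∈ T, ((if i = i₀ then j else α i : ℕ) : ZMod p) * c i
              = (α i : ZMod p) * c i := by
            intro i hi
            have : i ≠ i₀ := by
              intro h
              subst h
              exact hi₀ hi
            rw [if_neg this]
          rw [Finset.sum_congr rfl hT]
          ring
      · have h2 := AP_card A hAne (hc i₀ (Finset.mem_insert_self i₀ T)) (a i₀)
        rw [Finset.sum_insert hi₀]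
        omega

end Cover

section Upper

variable {r s : ℕ} {F : Type*} [Field F]
variable {p : ℕ} {ζ : F} {k : Fin r → ℕ} {lam : Fin r → F}

def vx (r s : ℕ) (i : Fin r) : DVar r s := Sum.inl (Sum.inl i)
def vy (r s : ℕ) (i : Fin r) : DVar r s := Sum.inl (Sum.inr i)
def vz (r s : ℕ) (j : Fin s) : DVar r s := Sum.inr (Sum.inl j)
def vw (r s : ℕ) (j : Fin s) : DVar r s := Sum.inr (Sum.inr j)

lemma deg_fin (d : DVar r s →₀ ℕ) : d.degree = ∑ v : DVar r s, d v := by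
  rw [Finsupp.degree]
  refine Finset.sum_subset (Finset.subset_univ _) ?_
  intro v _ hv
  exact Finsupp.notMem_support_iff.mp hv

lemma deg_split (d : DVar r s →₀ ℕ) :
    d.degree = (∑ i : Fin r, (d (vx r s i) + d (vy r s i)))
      + ∑ j : Fin s, (d (vz r s j) + d (vw r s j)) := by
  rw [deg_fin, Fintype.sum_sum_type, Fintype.sum_sum_type, Fintype.sum_sum_type,
    Finset.sum_add_distrib, Finset.sum_add_distrib]
  rfl

lemma mem_of_zw_bad (hp : 0 < p) (hζ : IsPrimitiveRoot ζ p) (hk : ∀ i, lam i = ζ ^ k i)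
    {d : DVar r s →₀ ℕ} (j : Fin s) (h : 2 ≤ d (vz r s j) + d (vw r s j)) :
    (monomial d 1 : MvPolynomial (DVar r s) F) ∈ HilbertIdeal F r s lam := by
  rcases Nat.lt_or_ge (d (vz r s j)) 1 with h1 | h1
  · exact zwsq_mem hp hζ hk (vw r s j) (dvd_zero p) (by omega)
  rcases Nat.lt_or_ge (d (vw r s j)) 1 with h2 | h2
  · exact zwsq_mem hp hζ hk (vz r s j) (dvd_zero p) (by omega)
  · exact pair_mem hp hζ hk (vz r s j) h1 h2

lemma mem_of_xy_big (hpp : p.Prime) (hζ : IsPrimitiveRoot ζ p) (hk : ∀ i, lam i = ζ ^ k i)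
    (hknz : ∀ i, ¬ (p ∣ k i)) {d : DVar r s →₀ ℕ}
    (hbig : max r p < ∑ i : Fin r, (d (vx r s i) + d (vy r s i))) :
    (monomial d 1 : MvPolynomial (DVar r s) F) ∈ HilbertIdeal F r s lam := by
  haveI : Fact p.Prime := ⟨hpp⟩
  haveI : NeZero p := ⟨hpp.ne_zero⟩
  have hp : 0 < p := hpp.pos
  by_cases hbad : ∃ i, 1 ≤ d (vx r s i) ∧ 1 ≤ d (vy r s i)
  · obtain ⟨i, h1, h2⟩ := hbad
    exact pair_mem hp hζ hk (vx r s i) h1 h2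
  push_neg at hbad
  -- one-sided
  have hone : ∀ i, d (vx r s i) = 0 ∨ d (vy r s i) = 0 := by
    intro i
    rcases Nat.lt_or_ge (d (vx r s i)) 1 with h | h
    · left; omega
    · right; have := hbad i h; omega
  set a : Fin r → ℕ := fun i => d (vx r s i) + d (vy r s i) with ha
  have hbig2 : max r p < ∑ i : Fin r, a i := hbig
  have hi₀ : ∃ i₀, 2 ≤ a i₀ := by
    by_contra hno
    push_neg at hno
    have h7 : ∑ i : Fin r, a i ≤ ∑ _i : Fin r, 1 :=
      Finset.sum_le_sum (fun i _ => by have := hno i; omega)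
    simp only [Finset.sum_const, Finset.card_univ, Fintype.card_fin, smul_eq_mul, mul_one] at h7
    have h8 := le_max_left r p
    omega
  obtain ⟨i₀, hi₀⟩ := hi₀
  set c : Fin r → ZMod p := fun i => if d (vy r s i) = 0 then (k i : ZMod p) else -(k i : ZMod p)
    with hc
  have hcnz : ∀ i, c i ≠ 0 := by
    intro i
    have : (k i : ZMod p) ≠ 0 := by
      rw [Ne, ZMod.natCast_eq_zero_iff]
      exact hknz i
    rw [hc]
    dsimp only
    split_ifs
    · exact this
    · exact neg_ne_zero.mpr this
  set a' : Fin r → ℕ := fun i => if i = i₀ then a i - 2 else a i with ha'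
  have hsum' : p ≤ 1 + ∑ i : Fin r, a' i := by
    have h1 : a' i₀ + ∑ i ∈ Finset.univ.erase i₀, a' i = ∑ i : Fin r, a' i :=
      Finset.add_sum_erase _ _ (Finset.mem_univ i₀)
    have h2 : a i₀ + ∑ i ∈ Finset.univ.erase i₀, a i = ∑ i : Fin r, a i :=
      Finset.add_sum_erase _ _ (Finset.mem_univ i₀)
    have h3 : ∑ i ∈ Finset.univ.erase i₀, a' i = ∑ i ∈ Finset.univ.erase i₀, a i := by
      refine Finset.sum_congr rfl (fun i hi => ?_)
      rw [ha']
      dsimp only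
      rw [if_neg (Finset.ne_of_mem_erase hi)]
    have h4 : a' i₀ = a i₀ - 2 := by rw [ha']; dsimp only; rw [if_pos rfl]
    have h6 : p ≤ max r p := le_max_right _ _
    omega
  obtain ⟨α, hαle, -, hαsum⟩ := cover_exists Finset.univ a' c (fun i _ => hcnz i) hsum' (-(c i₀))
  set β : Fin r → ℕ := fun i => if i = i₀ then α i + 1 else α i with hβ
  have hβsum : ∑ i : Fin r, (β i : ZMod p) * c i = 0 := by
    have h1 : ∀ i : Fin r, (β i : ZMod p) * c i
        = (α i : ZMod p) * c i + (if i = i₀ then c i₀ else 0) := by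
      intro i
      rw [hβ]
      dsimp only
      split_ifs with h
      · subst h; push_cast; ring
      · rw [add_zero]
    rw [Finset.sum_congr rfl (fun i _ => h1 i), Finset.sum_add_distrib,
      Finset.sum_ite_eq' Finset.univ i₀ (fun _ => c i₀), if_pos (Finset.mem_univ i₀), ← hαsum]
    ring
  -- the submonomial m₀
  set sd : Fin r → DVar r s := fun i => if d (vy r s i) = 0 then vx r s i else vy r s i with hsd
  set m₀ : DVar r s →₀ ℕ := Finsupp.equivFunOnFinite.symm (fun v =>
    match v with
    | Sum.inl (Sum.inl i) => if d (vy r s i) = 0 then β i else 0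
    | Sum.inl (Sum.inr i) => if d (vy r s i) = 0 then 0 else β i
    | Sum.inr _ => 0) with hm₀
  have hm₀x : ∀ i, m₀ (vx r s i) = if d (vy r s i) = 0 then β i else 0 := fun i => rfl
  have hm₀y : ∀ i, m₀ (vy r s i) = if d (vy r s i) = 0 then 0 else β i := fun i => rfl
  have hm₀z : ∀ u, m₀ (Sum.inr u) = 0 := fun u => rfl
  have hβle : ∀ i, β i ≤ a i := by
    intro i
    have h1 := hαle i
    rw [hβ]; dsimp only
    split_ifs with h
    · subst h
      rw [ha'] at h1; dsimp only at h1; rw [if_pos rfl] at h1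
      omega
    · rw [ha'] at h1; dsimp only at h1; rw [if_neg h] at h1
      exact h1
  have hβi₀ : β i₀ + 1 ≤ a i₀ := by
    have h1 := hαle i₀
    rw [ha'] at h1; dsimp only at h1; rw [if_pos rfl] at h1
    rw [hβ]; dsimp only; rw [if_pos rfl]
    omega
  have hβi₀pos : 1 ≤ β i₀ := by rw [hβ]; dsimp only; rw [if_pos rfl]; omega
  -- m₀ ≤ d
  have hae : ∀ i, a i = d (vx r s i) + d (vy r s i) := fun i => rfl
  have hm₀le : m₀ ≤ d := by
    intro v
    rcases v with (i|i)|u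
    · show m₀ (vx r s i) ≤ d (vx r s i)
      rw [hm₀x]
      split_ifs with h
      · have h9 := hae i
        have := hβle i
        omega
      · exact Nat.zero_le _
    · show m₀ (vy r s i) ≤ d (vy r s i)
      rw [hm₀y]
      split_ifs with h
      · exact Nat.zero_le _
      · have hx0 : d (vx r s i) = 0 := (hone i).resolve_right h
        have h9 := hae i
        have := hβle i
        omega
    · show m₀ (Sum.inr u) ≤ d (Sum.inr u)
      rw [hm₀z]
      exact Nat.zero_le _
  -- weight of m₀ is divisible by p
  have hm₀wt : p ∣ Mwt p k m₀ := by
    rw [← ZMod.natCast_eq_zero_iff, Mwt_fintype, Nat.cast_sum]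
    rw [Fintype.sum_sum_type]
    have hz : ∑ u : Fin s ⊕ Fin s, ((m₀ (Sum.inr u) * kap p k (Sum.inr u) : ℕ) : ZMod p) = 0 := by
      refine Finset.sum_eq_zero (fun u _ => ?_)
      rw [hm₀z, zero_mul, Nat.cast_zero]
    rw [hz, add_zero, Fintype.sum_sum_type]
    have hpm1 : (((p - 1 : ℕ)) : ZMod p) = -1 := by
      have h2 : p - 1 + 1 = p := by omega
      calc ((p-1:ℕ) : ZMod p) = ((p-1:ℕ) : ZMod p) + ((1:ℕ):ZMod p) - 1 := by push_cast; ring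
      _ = ((p:ℕ) : ZMod p) - 1 := by rw [← Nat.cast_add, h2]
      _ = -1 := by rw [ZMod.natCast_self]; ring
    have hx : ∀ i : Fin r, ((m₀ ((Sum.inl (Sum.inl i) : DVar r s)) * kap p k ((Sum.inl (Sum.inl i) : DVar r s)) : ℕ) : ZMod p)
        + ((m₀ ((Sum.inl (Sum.inr i) : DVar r s)) * kap p k ((Sum.inl (Sum.inr i) : DVar r s)) : ℕ) : ZMod p)
        = (β i : ZMod p) * c i := by
      intro i
      rw [show m₀ ((Sum.inl (Sum.inl i) : DVar r s)) = m₀ (vx r s i) from rfl,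
        show m₀ ((Sum.inl (Sum.inr i) : DVar r s)) = m₀ (vy r s i) from rfl, hm₀x, hm₀y]
      show (((if d (vy r s i) = 0 then β i else 0) * k i : ℕ) : ZMod p)
        + (((if d (vy r s i) = 0 then 0 else β i) * (k i * (p-1)) : ℕ) : ZMod p) = _
      rw [hc]
      dsimp only
      split_ifs with h
      · push_cast; ring
      · push_cast [hpm1]; ring
    rw [← Finset.sum_add_distrib]
    rw [Finset.sum_congr rfl (fun i _ => hx i)]
    exact hβsum
  have hm₀ne : m₀ ≠ 0 := by
    intro h
    have h2 : m₀ (sd i₀) = β i₀ := by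
      rw [hsd]
      dsimp only
      split_ifs with hcase
      · rw [hm₀x, if_pos hcase]
      · rw [hm₀y, if_neg hcase]
    rw [h] at h2
    simp only [Finsupp.coe_zero, Pi.zero_apply] at h2
    omega
  refine reduce_mem hp hζ hk hm₀le hm₀wt hm₀ne ?_
  -- the swapped monomial contains the pair x_{i₀} y_{i₀}
  have hdsd : d (sd i₀) = a i₀ := by
    have h9 := hae i₀
    rw [hsd]; dsimp only
    split_ifs with hcase
    · omega
    · have hx0 : d (vx r s i₀) = 0 := (hone i₀).resolve_right hcase
      omega
  have hm₀sd : m₀ (sd i₀) = β i₀ := by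
    rw [hsd]; dsimp only
    split_ifs with hcase
    · rw [hm₀x, if_pos hcase]
    · rw [hm₀y, if_neg hcase]
  have hm₀swap : m₀ (dswap (sd i₀)) = 0 := by
    rw [hsd]; dsimp only
    split_ifs with hcase
    · show m₀ (vy r s i₀) = 0
      rw [hm₀y, if_pos hcase]
    · show m₀ (vx r s i₀) = 0
      rw [hm₀x, if_neg hcase]
  have hdswap : d (dswap (sd i₀)) = 0 := by
    rw [hsd]; dsimp only
    split_ifs with hcase
    · exact hcase
    · exact (hone i₀).resolve_right hcase
  refine pair_mem hp hζ hk (sd i₀) ?_ ?_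
  · rw [Finsupp.add_apply, Finsupp.tsub_apply, hdsd, hm₀sd, sw_apply, hm₀swap]
    omega
  · rw [Finsupp.add_apply, Finsupp.tsub_apply, hdswap, hm₀swap, sw_apply, dswap_dswap, hm₀sd]
    omega

end Upper

section UpperFinal

variable {r s : ℕ} {F : Type*} [Field F]
variable {p : ℕ} {ζ : F} {k : Fin r → ℕ} {lam : Fin r → F}

lemma monomial_upper_pos (hpp : p.Prime) (hζ : IsPrimitiveRoot ζ p)
    (hk : ∀ i, lam i = ζ ^ k i) (hknz : ∀ i, ¬ (p ∣ k i)) {d : DVar r s →₀ ℕ}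
    (hdeg : s + max r p < d.degree) :
    (monomial d 1 : MvPolynomial (DVar r s) F) ∈ HilbertIdeal F r s lam := by
  have hp : 0 < p := hpp.pos
  by_cases hzw : ∃ j : Fin s, 2 ≤ d (vz r s j) + d (vw r s j)
  · obtain ⟨j, hj⟩ := hzw
    exact mem_of_zw_bad hp hζ hk j hj
  push_neg at hzw
  have hzws : ∑ j : Fin s, (d (vz r s j) + d (vw r s j)) ≤ s := by
    have h7 : ∑ j : Fin s, (d (vz r s j) + d (vw r s j)) ≤ ∑ _j : Fin s, 1 :=
      Finset.sum_le_sum (fun j _ => by have := hzw j; omega)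
    simpa using h7
  have hsplit := deg_split d
  refine mem_of_xy_big hpp hζ hk hknz ?_
  omega

lemma monomial_upper_zero (hpp : p.Prime) (hζ : IsPrimitiveRoot ζ p)
    (hk : ∀ i, lam i = ζ ^ k i) (hr : r = 0) {d : DVar r s →₀ ℕ}
    (hdeg : s < d.degree) :
    (monomial d 1 : MvPolynomial (DVar r s) F) ∈ HilbertIdeal F r s lam := by
  have hp : 0 < p := hpp.pos
  by_cases hzw : ∃ j : Fin s, 2 ≤ d (vz r s j) + d (vw r s j)
  · obtain ⟨j, hj⟩ := hzw
    exact mem_of_zw_bad hp hζ hk j hj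
  push_neg at hzw
  have hzws : ∑ j : Fin s, (d (vz r s j) + d (vw r s j)) ≤ s := by
    have h7 : ∑ j : Fin s, (d (vz r s j) + d (vw r s j)) ≤ ∑ _j : Fin s, 1 :=
      Finset.sum_le_sum (fun j _ => by have := hzw j; omega)
    simpa using h7
  have hsplit := deg_split d
  have hxy0 : ∑ i : Fin r, (d (vx r s i) + d (vy r s i)) = 0 := by
    subst hr
    simp
  omega

/-- upper bound for arbitrary homogeneous polynomials -/
lemma homog_upper (hpp : p.Prime) (hζ : IsPrimitiveRoot ζ p)
    (hk : ∀ i, lam i = ζ ^ k i) (hknz : ∀ i, ¬ (p ∣ k i)) {f : MvPolynomial (DVar r s) F}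
    {n : ℕ} (hf : f.IsHomogeneous n) (hbound : (s + max r p < n) ∨ (r = 0 ∧ s < n)) :
    f ∈ HilbertIdeal F r s lam := by
  rw [f.as_sum]
  refine Ideal.sum_mem _ (fun m hm => ?_)
  have hdeg : m.degree = n := by
    rw [Finsupp.degree_eq_weight_one]
    exact hf (Finsupp.mem_support_iff.mp hm)
  have : (monomial m (coeff m f) : MvPolynomial (DVar r s) F)
      = C (coeff m f) * monomial m 1 := by
    rw [← monomial_zero', monomial_mul, zero_add, mul_one]
  rw [this]
  refine Ideal.mul_mem_left _ _ ?_
  rcases hbound with h | ⟨hr, h⟩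
  · exact monomial_upper_pos hpp hζ hk hknz (by omega)
  · exact monomial_upper_zero hpp hζ hk hr (by omega)

end UpperFinal

section Engine

variable {r s : ℕ} {F : Type*} [Field F] [CharP F 2]
variable {p : ℕ} {ζ : F} {k : Fin r → ℕ} {lam : Fin r → F}

/-- the linear functional summing coefficients over S' -/
def Lfun (F : Type*) [Field F] {r s : ℕ} (S' : Finset (DVar r s →₀ ℕ)) :
    MvPolynomial (DVar r s) F →ₗ[F] F :=
  ∑ d ∈ S', MvPolynomial.lcoeff F d

lemma Lfun_apply (S' : Finset (DVar r s →₀ ℕ)) (f : MvPolynomial (DVar r s) F) :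
    Lfun F S' f = ∑ d ∈ S', coeff d f := by
  unfold Lfun
  rw [LinearMap.coe_sum, Finset.sum_apply]
  rfl

lemma Lfun_mono_mul (hp : 0 < p) (hζ : IsPrimitiveRoot ζ p) (hk : ∀ i, lam i = ζ ^ k i)
    (S' : Finset (DVar r s →₀ ℕ))
    (hP2 : ∀ e m : DVar r s →₀ ℕ, p ∣ Mwt p k m → e + m ∈ S' → e + sw m ∈ S')
    (hP3 : ∀ e m : DVar r s →₀ ℕ, sw m = m → m ≠ 0 → p ∣ Mwt p k m → e + m ∉ S')
    {g : MvPolynomial (DVar r s) F}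
    (h1 : sigmaMap F r s g = g) (h2 : rhoMap F r s lam g = g) (h3 : constantCoeff g = 0)
    (e : DVar r s →₀ ℕ) :
    Lfun F S' (monomial e 1 * g) = 0 := by
  rw [Lfun_apply]
  have hstep1 : ∀ d ∈ S', coeff d (monomial e 1 * g)
      = if e ≤ d then coeff (d - e) g else 0 := by
    intro d _
    rw [coeff_monomial_mul']
    split_ifs
    · rw [one_mul]
    · rfl
  rw [Finset.sum_congr rfl hstep1, ← Finset.sum_filter]
  set T : Finset (DVar r s →₀ ℕ) := g.support.filter (fun m => e + m ∈ S') with hT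
  have hinj : ∀ x ∈ S'.filter (fun d => e ≤ d), ∀ y ∈ S'.filter (fun d => e ≤ d),
      x - e = y - e → x = y := by
    intro x hx y hy hxy
    have hex : e ≤ x := (Finset.mem_filter.mp hx).2
    have hey : e ≤ y := (Finset.mem_filter.mp hy).2
    have := congrArg (· + e) hxy
    rwa [tsub_add_cancel_of_le hex, tsub_add_cancel_of_le hey] at this
  rw [show (∑ d ∈ S'.filter (fun d => e ≤ d), coeff (d - e) g)
      = ∑ m ∈ (S'.filter (fun d => e ≤ d)).image (fun d => d - e), coeff m g from
    (Finset.sum_image hinj).symm]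
  have hTsub : T ⊆ (S'.filter (fun d => e ≤ d)).image (fun d => d - e) := by
    intro m hm
    rw [hT, Finset.mem_filter] at hm
    refine Finset.mem_image.mpr ⟨e + m, ?_, add_tsub_cancel_left e m⟩
    refine Finset.mem_filter.mpr ⟨hm.2, le_add_right (le_refl e)⟩
  rw [← Finset.sum_subset hTsub ?_]
  · -- the involution argument
    refine Finset.sum_involution (fun m _ => sw m) ?_ ?_ ?_ ?_
    · intro m hm
      rw [hT, Finset.mem_filter] at hm
      rw [coeff_sigma_invariant h1, CharTwo.add_self_eq_zero]
    · intro m hm _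
      rw [hT, Finset.mem_filter] at hm
      intro hfix
      have hfix' : sw m = m := hfix
      have hm0 : m ≠ 0 := by
        intro h0
        have hc0 : coeff m g = 0 := by
          rw [h0, ← congrFun constantCoeff_eq g]
          exact h3
        exact MvPolynomial.mem_support_iff.mp hm.1 hc0
      have hwt : p ∣ Mwt p k m :=
        dvd_Mwt_of_mem_support hp hζ hk h2 (MvPolynomial.mem_support_iff.mp hm.1)
      exact hP3 e m hfix' hm0 hwt hm.2
    · intro m hm
      show sw m ∈ T
      rw [hT, Finset.mem_filter] at hm ⊢
      constructor
      · rw [MvPolynomial.mem_support_iff, coeff_sigma_invariant h1]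
        exact MvPolynomial.mem_support_iff.mp hm.1
      · refine hP2 e m ?_ hm.2
        exact dvd_Mwt_of_mem_support hp hζ hk h2 (MvPolynomial.mem_support_iff.mp hm.1)
    · intro m _
      exact sw_sw m
  · intro m hmU hmT
    obtain ⟨d, hd, rfl⟩ := Finset.mem_image.mp hmU
    rw [Finset.mem_filter] at hd
    by_contra hne
    apply hmT
    rw [hT, Finset.mem_filter]
    refine ⟨MvPolynomial.mem_support_iff.mpr hne, ?_⟩
    rw [add_tsub_cancel_of_le hd.2]
    exact hd.1

lemma Lfun_vanish (hp : 0 < p) (hζ : IsPrimitiveRoot ζ p) (hk : ∀ i, lam i = ζ ^ k i)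
    (S' : Finset (DVar r s →₀ ℕ))
    (hP2 : ∀ e m : DVar r s →₀ ℕ, p ∣ Mwt p k m → e + m ∈ S' → e + sw m ∈ S')
    (hP3 : ∀ e m : DVar r s →₀ ℕ, sw m = m → m ≠ 0 → p ∣ Mwt p k m → e + m ∉ S')
    {h : MvPolynomial (DVar r s) F} (hmem : h ∈ HilbertIdeal F r s lam) :
    Lfun F S' h = 0 := by
  have main : ∀ (x : MvPolynomial (DVar r s) F), x ∈ HilbertIdeal F r s lam →
      ∀ q : MvPolynomial (DVar r s) F, Lfun F S' (q * x) = 0 := by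
    intro x hx
    refine Submodule.span_induction ?_ ?_ ?_ ?_ hx
    · -- generators
      rintro g ⟨h1, h2, h3⟩ q
      conv_lhs => rw [q.as_sum, Finset.sum_mul, map_sum]
      refine Finset.sum_eq_zero (fun u _ => ?_)
      have : (monomial u (coeff u q) : MvPolynomial (DVar r s) F) * g
          = (coeff u q) • (monomial u 1 * g) := by
        rw [smul_eq_C_mul, ← mul_assoc, ← monomial_zero', monomial_mul, zero_add, mul_one]
      rw [this, map_smul, Lfun_mono_mul hp hζ hk S' hP2 hP3 h1 h2 h3 u, smul_zero]
    · intro q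
      rw [mul_zero, map_zero]
    · intro x y _ _ ihx ihy q
      rw [mul_add, map_add, ihx q, ihy q, add_zero]
    · intro a x _ ihx q
      rw [smul_eq_mul, ← mul_assoc]
      exact ihx (q * a)
  have := main h hmem 1
  rwa [one_mul] at this

end Engine

section S1sec

variable {r s : ℕ}

def pat (a b : ℕ) : Prop := (a = 1 ∧ b = 0) ∨ (a = 0 ∧ b = 1)

def sqExp (r s : ℕ) (b : Fin r → Bool) (g : Fin s → Bool) : DVar r s →₀ ℕ :=
  Finsupp.equivFunOnFinite.symm fun v => match v with
  | .inl (.inl i) => if b i then 1 else 0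
  | .inl (.inr i) => if b i then 0 else 1
  | .inr (.inl j) => if g j then 1 else 0
  | .inr (.inr j) => if g j then 0 else 1

def S1 (r s : ℕ) : Finset (DVar r s →₀ ℕ) :=
  Finset.image (fun bg : (Fin r → Bool) × (Fin s → Bool) => sqExp r s bg.1 bg.2)
    Finset.univ

def Shape1 (d : DVar r s →₀ ℕ) : Prop :=
  (∀ i, pat (d (vx r s i)) (d (vy r s i))) ∧ (∀ j, pat (d (vz r s j)) (d (vw r s j)))

lemma sqExp_x (b : Fin r → Bool) (g : Fin s → Bool) (i : Fin r) :
    sqExp r s b g (vx r s i) = if b i then 1 else 0 := rfl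
lemma sqExp_y (b : Fin r → Bool) (g : Fin s → Bool) (i : Fin r) :
    sqExp r s b g (vy r s i) = if b i then 0 else 1 := rfl
lemma sqExp_z (b : Fin r → Bool) (g : Fin s → Bool) (j : Fin s) :
    sqExp r s b g (vz r s j) = if g j then 1 else 0 := rfl
lemma sqExp_w (b : Fin r → Bool) (g : Fin s → Bool) (j : Fin s) :
    sqExp r s b g (vw r s j) = if g j then 0 else 1 := rfl

lemma mem_S1_iff {d : DVar r s →₀ ℕ} : d ∈ S1 r s ↔ Shape1 d := by
  constructor
  · intro hd
    obtain ⟨⟨b, g⟩, -, rfl⟩ := Finset.mem_image.mp hd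
    constructor
    · intro i
      rw [sqExp_x, sqExp_y]
      by_cases h : b i
      · rw [if_pos h, if_pos h]; left; exact ⟨rfl, rfl⟩
      · rw [if_neg h, if_neg h]; right; exact ⟨rfl, rfl⟩
    · intro j
      rw [sqExp_z, sqExp_w]
      by_cases h : g j
      · rw [if_pos h, if_pos h]; left; exact ⟨rfl, rfl⟩
      · rw [if_neg h, if_neg h]; right; exact ⟨rfl, rfl⟩
  · rintro ⟨h1, h2⟩
    refine Finset.mem_image.mpr ⟨⟨fun i => decide (d (vx r s i) = 1),
      fun j => decide (d (vz r s j) = 1)⟩, Finset.mem_univ _, ?_⟩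
    ext v
    rcases v with (i|i)|(j|j)
    · show (if decide (d (vx r s i) = 1) = true then 1 else 0) = d (vx r s i)
      rcases h1 i with ⟨hx, hy⟩ | ⟨hx, hy⟩ <;> simp [hx, hy]
    · show (if decide (d (vx r s i) = 1) = true then 0 else 1) = d (vy r s i)
      rcases h1 i with ⟨hx, hy⟩ | ⟨hx, hy⟩ <;> simp [hx, hy]
    · show (if decide (d (vz r s j) = 1) = true then 1 else 0) = d (vz r s j)
      rcases h2 j with ⟨hx, hy⟩ | ⟨hx, hy⟩ <;> simp [hx, hy]
    · show (if decide (d (vz r s j) = 1) = true then 0 else 1) = d (vw r s j)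
      rcases h2 j with ⟨hx, hy⟩ | ⟨hx, hy⟩ <;> simp [hx, hy]

lemma S1_P2 (e m : DVar r s →₀ ℕ) (hmem : e + m ∈ S1 r s) : e + sw m ∈ S1 r s := by
  rw [mem_S1_iff] at hmem ⊢
  obtain ⟨h1, h2⟩ := hmem
  constructor
  · intro i
    have h := h1 i
    rw [Finsupp.add_apply, Finsupp.add_apply] at h
    rw [Finsupp.add_apply, Finsupp.add_apply, sw_apply, sw_apply]
    have hd1 : dswap (vx r s i) = vy r s i := rfl
    have hd2 : dswap (vy r s i) = vx r s i := rfl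
    rw [hd1, hd2]
    unfold pat at h ⊢
    omega
  · intro j
    have h := h2 j
    rw [Finsupp.add_apply, Finsupp.add_apply] at h
    rw [Finsupp.add_apply, Finsupp.add_apply, sw_apply, sw_apply]
    have hd1 : dswap (vz r s j) = vw r s j := rfl
    have hd2 : dswap (vw r s j) = vz r s j := rfl
    rw [hd1, hd2]
    unfold pat at h ⊢
    omega

lemma S1_P3 (e m : DVar r s →₀ ℕ) (hfix : sw m = m) (hm : m ≠ 0) : e + m ∉ S1 r s := by
  intro hmem
  rw [mem_S1_iff] at hmem
  obtain ⟨h1, h2⟩ := hmem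
  obtain ⟨v, hv⟩ : ∃ v, m v ≠ 0 := by
    by_contra hno
    push_neg at hno
    exact hm (Finsupp.ext hno)
  have hswv : ∀ u, m (dswap u) = m u := by
    intro u
    rw [← sw_apply, hfix]
  rcases v with (i|i)|(j|j)
  · have h := h1 i
    have hv' : m (vx r s i) ≠ 0 := hv
    have := hswv (vx r s i)
    have hx := Finsupp.add_apply e m (vx r s i)
    have hy := Finsupp.add_apply e m (vy r s i)
    unfold pat at h
    show False
    have hd : m (dswap (vx r s i)) = m (vy r s i) := rfl
    omega
  · have h := h1 i
    have hv' : m (vy r s i) ≠ 0 := hv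
    have := hswv (vy r s i)
    have hx := Finsupp.add_apply e m (vx r s i)
    have hy := Finsupp.add_apply e m (vy r s i)
    unfold pat at h
    have hd : m (dswap (vy r s i)) = m (vx r s i) := rfl
    omega
  · have h := h2 j
    have hv' : m (vz r s j) ≠ 0 := hv
    have := hswv (vz r s j)
    have hx := Finsupp.add_apply e m (vz r s j)
    have hy := Finsupp.add_apply e m (vw r s j)
    unfold pat at h
    have hd : m (dswap (vz r s j)) = m (vw r s j) := rfl
    omega
  · have h := h2 j
    have hv' : m (vw r s j) ≠ 0 := hv
    have := hswv (vw r s j)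
    have hx := Finsupp.add_apply e m (vz r s j)
    have hy := Finsupp.add_apply e m (vw r s j)
    unfold pat at h
    have hd : m (dswap (vw r s j)) = m (vz r s j) := rfl
    omega

def W1 (r s : ℕ) : DVar r s →₀ ℕ := sqExp r s (fun _ => true) (fun _ => true)

lemma W1_mem : W1 r s ∈ S1 r s :=
  Finset.mem_image.mpr ⟨⟨fun _ => true, fun _ => true⟩, Finset.mem_univ _, rfl⟩

lemma W1_degree : (W1 r s).degree = r + s := by
  rw [deg_split]
  have hx : ∀ i : Fin r, W1 r s (vx r s i) + W1 r s (vy r s i) = 1 := fun i => rfl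
  have hz : ∀ j : Fin s, W1 r s (vz r s j) + W1 r s (vw r s j) = 1 := fun j => rfl
  rw [Finset.sum_congr rfl (fun i _ => hx i), Finset.sum_congr rfl (fun j _ => hz j)]
  simp

end S1sec

section S2sec

variable {r s : ℕ} {p : ℕ} {k : Fin r → ℕ}

lemma cast_pred (hp : 0 < p) : ((p - 1 : ℕ) : ZMod p) = -1 := by
  have h2 : p - 1 + 1 = p := by omega
  calc ((p-1:ℕ) : ZMod p) = ((p-1:ℕ) : ZMod p) + ((1:ℕ):ZMod p) - 1 := by push_cast; ring
  _ = ((p:ℕ) : ZMod p) - 1 := by rw [← Nat.cast_add, h2]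
  _ = -1 := by rw [ZMod.natCast_self]; ring

lemma Mwt_cast (hp : 0 < p) (d : DVar r s →₀ ℕ) :
    ((Mwt p k d : ℕ) : ZMod p)
      = ∑ i : Fin r, ((d (vx r s i) : ZMod p) - (d (vy r s i) : ZMod p)) * (k i : ZMod p) := by
  rw [Mwt_fintype, Nat.cast_sum, Fintype.sum_sum_type, Fintype.sum_sum_type]
  have hz : ∑ u : Fin s ⊕ Fin s, ((d (Sum.inr u) * kap p k (Sum.inr u) : ℕ) : ZMod p) = 0 := by
    refine Finset.sum_eq_zero (fun u _ => ?_)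
    have : kap p k (Sum.inr u : DVar r s) = 0 := by rcases u with j | j <;> rfl
    rw [this, Nat.mul_zero, Nat.cast_zero]
  rw [hz, add_zero, ← Finset.sum_add_distrib]
  refine Finset.sum_congr rfl (fun i _ => ?_)
  have h1 : kap p k ((Sum.inl (Sum.inl i)) : DVar r s) = k i := rfl
  have h2 : kap p k ((Sum.inl (Sum.inr i)) : DVar r s) = k i * (p - 1) := rfl
  rw [h1, h2, show (Sum.inl (Sum.inl i) : DVar r s) = vx r s i from rfl,
    show (Sum.inl (Sum.inr i) : DVar r s) = vy r s i from rfl]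
  push_cast [cast_pred hp]
  ring

def xpExp (r s p : ℕ) (i₀ : Fin r) (b : Bool) (g : Fin s → Bool) : DVar r s →₀ ℕ :=
  Finsupp.equivFunOnFinite.symm fun v => match v with
  | .inl (.inl i) => if i = i₀ ∧ b = true then p else 0
  | .inl (.inr i) => if i = i₀ ∧ b = false then p else 0
  | .inr (.inl j) => if g j then 1 else 0
  | .inr (.inr j) => if g j then 0 else 1

def S2 (r s p : ℕ) (i₀ : Fin r) : Finset (DVar r s →₀ ℕ) :=
  Finset.image (fun bg : Bool × (Fin s → Bool) => xpExp r s p i₀ bg.1 bg.2) Finset.univ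

def Shape2 (p : ℕ) (i₀ : Fin r) (d : DVar r s →₀ ℕ) : Prop :=
  ((d (vx r s i₀) = p ∧ d (vy r s i₀) = 0) ∨ (d (vx r s i₀) = 0 ∧ d (vy r s i₀) = p)) ∧
  (∀ i, i ≠ i₀ → d (vx r s i) = 0 ∧ d (vy r s i) = 0) ∧
  (∀ j, pat (d (vz r s j)) (d (vw r s j)))

lemma xpExp_x (i₀ : Fin r) (b : Bool) (g : Fin s → Bool) (i : Fin r) :
    xpExp r s p i₀ b g (vx r s i) = if i = i₀ ∧ b = true then p else 0 := rfl
lemma xpExp_y (i₀ : Fin r) (b : Bool) (g : Fin s → Bool) (i : Fin r) :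
    xpExp r s p i₀ b g (vy r s i) = if i = i₀ ∧ b = false then p else 0 := rfl
lemma xpExp_z (i₀ : Fin r) (b : Bool) (g : Fin s → Bool) (j : Fin s) :
    xpExp r s p i₀ b g (vz r s j) = if g j then 1 else 0 := rfl
lemma xpExp_w (i₀ : Fin r) (b : Bool) (g : Fin s → Bool) (j : Fin s) :
    xpExp r s p i₀ b g (vw r s j) = if g j then 0 else 1 := rfl

lemma mem_S2_iff (hp : 0 < p) {i₀ : Fin r} {d : DVar r s →₀ ℕ} :
    d ∈ S2 r s p i₀ ↔ Shape2 p i₀ d := by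
  constructor
  · intro hd
    obtain ⟨⟨b, g⟩, -, rfl⟩ := Finset.mem_image.mp hd
    refine ⟨?_, ?_, ?_⟩
    · rw [xpExp_x, xpExp_y]
      cases b
      · right
        rw [if_neg (by simp), if_pos ⟨rfl, rfl⟩]
        exact ⟨rfl, rfl⟩
      · left
        rw [if_pos ⟨rfl, rfl⟩, if_neg (by simp)]
        exact ⟨rfl, rfl⟩
    · intro i hi
      rw [xpExp_x, xpExp_y, if_neg (by tauto), if_neg (by tauto)]
      exact ⟨rfl, rfl⟩
    · intro j
      rw [xpExp_z, xpExp_w]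
      by_cases h : g j
      · rw [if_pos h, if_pos h]; left; exact ⟨rfl, rfl⟩
      · rw [if_neg h, if_neg h]; right; exact ⟨rfl, rfl⟩
  · rintro ⟨h1, h2, h3⟩
    refine Finset.mem_image.mpr ⟨⟨decide (d (vy r s i₀) = 0),
      fun j => decide (d (vz r s j) = 1)⟩, Finset.mem_univ _, ?_⟩
    ext v
    rcases v with (i|i)|(j|j)
    · show (if i = i₀ ∧ decide (d (vy r s i₀) = 0) = true then p else 0) = d (vx r s i)
      by_cases hi : i = i₀
      · subst hi
        rcases h1 with ⟨hx, hy⟩ | ⟨hx, hy⟩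
        · rw [if_pos ⟨rfl, by simp [hy]⟩, hx]
        · rw [if_neg ?_, hx]
          rintro ⟨-, hdec⟩
          rw [decide_eq_true_eq] at hdec
          omega
      · rw [if_neg (by tauto), (h2 i hi).1]
    · show (if i = i₀ ∧ decide (d (vy r s i₀) = 0) = false then p else 0) = d (vy r s i)
      by_cases hi : i = i₀
      · subst hi
        rcases h1 with ⟨hx, hy⟩ | ⟨hx, hy⟩
        · rw [if_neg ?_, hy]
          rintro ⟨-, hdec⟩
          rw [hy] at hdec
          simp at hdec
        · rw [if_pos ⟨rfl, by rw [hy]; simp; omega⟩, hy]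
      · rw [if_neg (by tauto), (h2 i hi).2]
    · show (if decide (d (vz r s j) = 1) = true then 1 else 0) = d (vz r s j)
      rcases h3 j with ⟨hx, hy⟩ | ⟨hx, hy⟩ <;> simp [hx, hy]
    · show (if decide (d (vz r s j) = 1) = true then 0 else 1) = d (vw r s j)
      rcases h3 j with ⟨hx, hy⟩ | ⟨hx, hy⟩ <;> simp [hx, hy]

lemma S2_P2 (hpp : p.Prime) {i₀ : Fin r} (hknz : ¬ (p ∣ k i₀)) (e m : DVar r s →₀ ℕ)
    (hw : p ∣ Mwt p k m) (hmem : e + m ∈ S2 r s p i₀) : e + sw m ∈ S2 r s p i₀ := by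
  haveI : Fact p.Prime := ⟨hpp⟩
  haveI : NeZero p := ⟨hpp.ne_zero⟩
  have hp : 0 < p := hpp.pos
  rw [mem_S2_iff hp] at hmem ⊢
  obtain ⟨h1, h2, h3⟩ := hmem
  -- exponents away from i₀ vanish
  have hz2 : ∀ i, i ≠ i₀ → m (vx r s i) = 0 ∧ m (vy r s i) = 0
      ∧ e (vx r s i) = 0 ∧ e (vy r s i) = 0 := by
    intro i hi
    have h := h2 i hi
    rw [Finsupp.add_apply, Finsupp.add_apply] at h
    omega
  -- weight of m
  have hMk : ((m (vx r s i₀) : ZMod p) - (m (vy r s i₀) : ZMod p)) * (k i₀ : ZMod p) = 0 := by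
    have hcast : ((Mwt p k m : ℕ) : ZMod p) = 0 := by
      rw [ZMod.natCast_eq_zero_iff]
      exact hw
    rw [Mwt_cast hp] at hcast
    rw [← hcast]
    symm
    refine Finset.sum_eq_single i₀ ?_ ?_
    · intro i _ hi
      rw [(hz2 i hi).1, (hz2 i hi).2.1]
      simp
    · intro h
      exact absurd (Finset.mem_univ i₀) h
  have hknz' : (k i₀ : ZMod p) ≠ 0 := by
    rw [Ne, ZMod.natCast_eq_zero_iff]
    exact hknz
  have hxy : (m (vx r s i₀) : ZMod p) = (m (vy r s i₀) : ZMod p) := by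
    have := mul_eq_zero.mp hMk
    rcases this with h | h
    · linear_combination h
    · exact absurd h hknz'
  refine ⟨?_, ?_, ?_⟩
  · -- the i₀ pair
    have hax := Finsupp.add_apply e m (vx r s i₀)
    have hay := Finsupp.add_apply e m (vy r s i₀)
    have hswx : sw m (vx r s i₀) = m (vy r s i₀) := by rw [sw_apply]; rfl
    have hswy : sw m (vy r s i₀) = m (vx r s i₀) := by rw [sw_apply]; rfl
    rcases h1 with ⟨hx, hy⟩ | ⟨hx, hy⟩
    · -- case (p, 0) : m (vy i₀) = 0
      have hmy : m (vy r s i₀) = 0 := by omega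
      have hmx0 : (m (vx r s i₀) : ZMod p) = 0 := by rw [hxy, hmy, Nat.cast_zero]
      have hdvd : p ∣ m (vx r s i₀) := by
        rwa [ZMod.natCast_eq_zero_iff] at hmx0
      have hle : m (vx r s i₀) ≤ p := by omega
      obtain ⟨c, hc⟩ := hdvd
      have hcc : c = 0 ∨ c = 1 := by
        rcases Nat.lt_or_ge c 2 with h | h
        · omega
        · exfalso; nlinarith
      rcases hcc with rfl | rfl
      · -- m touches nothing at the i₀ pair
        left
        rw [Finsupp.add_apply, Finsupp.add_apply, hswx, hswy]
        omega
      · -- m (vx i₀) = p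
        right
        rw [Finsupp.add_apply, Finsupp.add_apply, hswx, hswy]
        omega
    · -- case (0, p) : m (vx i₀) = 0
      have hmx : m (vx r s i₀) = 0 := by omega
      have hmy0 : (m (vy r s i₀) : ZMod p) = 0 := by rw [← hxy, hmx, Nat.cast_zero]
      have hdvd : p ∣ m (vy r s i₀) := by
        rwa [ZMod.natCast_eq_zero_iff] at hmy0
      have hle : m (vy r s i₀) ≤ p := by omega
      obtain ⟨c, hc⟩ := hdvd
      have hcc : c = 0 ∨ c = 1 := by
        rcases Nat.lt_or_ge c 2 with h | h
        · omega
        · exfalso; nlinarith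
      rcases hcc with rfl | rfl
      · right
        rw [Finsupp.add_apply, Finsupp.add_apply, hswx, hswy]
        omega
      · left
        rw [Finsupp.add_apply, Finsupp.add_apply, hswx, hswy]
        omega
  · intro i hi
    have h := hz2 i hi
    have hswx : sw m (vx r s i) = m (vy r s i) := by rw [sw_apply]; rfl
    have hswy : sw m (vy r s i) = m (vx r s i) := by rw [sw_apply]; rfl
    rw [Finsupp.add_apply, Finsupp.add_apply, hswx, hswy]
    omega
  · intro j
    have h := h3 j
    rw [Finsupp.add_apply, Finsupp.add_apply] at h
    have hswz : sw m (vz r s j) = m (vw r s j) := by rw [sw_apply]; rfl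
    have hsww : sw m (vw r s j) = m (vz r s j) := by rw [sw_apply]; rfl
    rw [Finsupp.add_apply, Finsupp.add_apply, hswz, hsww]
    unfold pat at h ⊢
    omega

lemma S2_P3 (hp : 0 < p) {i₀ : Fin r} (e m : DVar r s →₀ ℕ)
    (hfix : sw m = m) (hm : m ≠ 0) : e + m ∉ S2 r s p i₀ := by
  intro hmem
  rw [mem_S2_iff hp] at hmem
  obtain ⟨h1, h2, h3⟩ := hmem
  obtain ⟨v, hv⟩ : ∃ v, m v ≠ 0 := by
    by_contra hno
    push_neg at hno
    exact hm (Finsupp.ext hno)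
  have hswv : ∀ u, m (dswap u) = m u := by
    intro u
    rw [← sw_apply, hfix]
  rcases v with (i|i)|(j|j)
  · have hv' : m (vx r s i) ≠ 0 := hv
    have hsym := hswv (vx r s i)
    have hd : m (dswap (vx r s i)) = m (vy r s i) := rfl
    have hx := Finsupp.add_apply e m (vx r s i)
    have hy := Finsupp.add_apply e m (vy r s i)
    by_cases hi : i = i₀
    · subst hi
      rcases h1 with ⟨ha, hb⟩ | ⟨ha, hb⟩ <;> omega
    · have h := h2 i hi
      omega
  · have hv' : m (vy r s i) ≠ 0 := hv
    have hsym := hswv (vy r s i)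
    have hd : m (dswap (vy r s i)) = m (vx r s i) := rfl
    have hx := Finsupp.add_apply e m (vx r s i)
    have hy := Finsupp.add_apply e m (vy r s i)
    by_cases hi : i = i₀
    · subst hi
      rcases h1 with ⟨ha, hb⟩ | ⟨ha, hb⟩ <;> omega
    · have h := h2 i hi
      omega
  · have hv' : m (vz r s j) ≠ 0 := hv
    have hsym := hswv (vz r s j)
    have hd : m (dswap (vz r s j)) = m (vw r s j) := rfl
    have hx := Finsupp.add_apply e m (vz r s j)
    have hy := Finsupp.add_apply e m (vw r s j)
    have h := h3 j
    unfold pat at h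
    omega
  · have hv' : m (vw r s j) ≠ 0 := hv
    have hsym := hswv (vw r s j)
    have hd : m (dswap (vw r s j)) = m (vz r s j) := rfl
    have hx := Finsupp.add_apply e m (vz r s j)
    have hy := Finsupp.add_apply e m (vw r s j)
    have h := h3 j
    unfold pat at h
    omega

def W2 (r s p : ℕ) (i₀ : Fin r) : DVar r s →₀ ℕ := xpExp r s p i₀ true (fun _ => true)

lemma W2_mem (i₀ : Fin r) : W2 r s p i₀ ∈ S2 r s p i₀ :=
  Finset.mem_image.mpr ⟨⟨true, fun _ => true⟩, Finset.mem_univ _, rfl⟩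

lemma W2_degree (i₀ : Fin r) : (W2 r s p i₀).degree = p + s := by
  rw [deg_split]
  have hx : ∀ i : Fin r, W2 r s p i₀ (vx r s i) + W2 r s p i₀ (vy r s i)
      = if i = i₀ then p else 0 := by
    intro i
    rw [show W2 r s p i₀ = xpExp r s p i₀ true (fun _ => true) from rfl, xpExp_x, xpExp_y]
    by_cases hi : i = i₀ <;> simp [hi]
  have hz : ∀ j : Fin s, W2 r s p i₀ (vz r s j) + W2 r s p i₀ (vw r s j) = 1 := fun _ => rfl
  rw [Finset.sum_congr rfl (fun i _ => hx i), Finset.sum_congr rfl (fun j _ => hz j),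
    Finset.sum_ite_eq' Finset.univ i₀ (fun _ => p), if_pos (Finset.mem_univ i₀)]
  simp

end S2sec

section Assemble

variable {r s : ℕ} {F : Type*} [Field F] [CharP F 2]
variable {p : ℕ} {ζ : F} {k : Fin r → ℕ} {lam : Fin r → F}

lemma witness_notMem (hp : 0 < p) (hζ : IsPrimitiveRoot ζ p) (hk : ∀ i, lam i = ζ ^ k i)
    (S' : Finset (DVar r s →₀ ℕ))
    (hP2 : ∀ e m : DVar r s →₀ ℕ, p ∣ Mwt p k m → e + m ∈ S' → e + sw m ∈ S')
    (hP3 : ∀ e m : DVar r s →₀ ℕ, sw m = m → m ≠ 0 → p ∣ Mwt p k m → e + m ∉ S')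
    {W : DVar r s →₀ ℕ} (hW : W ∈ S') :
    (monomial W 1 : MvPolynomial (DVar r s) F) ∉ HilbertIdeal F r s lam := by
  intro hmem
  have hv := Lfun_vanish hp hζ hk S' hP2 hP3 hmem
  rw [Lfun_apply] at hv
  rw [Finset.sum_congr rfl (fun d _ => coeff_monomial d W (1:F))] at hv
  rw [Finset.sum_ite_eq S' W (fun _ => (1:F)), if_pos hW] at hv
  exact one_ne_zero hv

end Assemble


/-- For `p` an odd prime, the top degree of the coinvariant ring `R/I_H`
(the largest `d` such that some homogeneous polynomial of degree `d` is not in `I_H`)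
equals `s + max r p` if `r ≥ 1`, and equals `s` if `r = 0`. -/
theorem topDegree_coinvariants_dihedral
    {F : Type*} [Field F] [CharP F 2] {r s p : ℕ} (hp : p.Prime) (hodd : Odd p)
    (ζ : F) (hζ : IsPrimitiveRoot ζ p)
    (lam : Fin r → F) (hlam : ∀ i, lam i ^ p = 1 ∧ lam i ≠ 1) :
    (1 ≤ r → IsGreatest {d : ℕ | ∃ f : MvPolynomial (DVar r s) F,
        f.IsHomogeneous d ∧ f ∉ HilbertIdeal F r s lam} (s + max r p)) ∧
    (r = 0 → IsGreatest {d : ℕ | ∃ f : MvPolynomial (DVar r s) F,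
        f.IsHomogeneous d ∧ f ∉ HilbertIdeal F r s lam} s) := by
  haveI : NeZero p := ⟨hp.ne_zero⟩
  have hp0 : 0 < p := hp.pos
  have hk' : ∀ i : Fin r, ∃ n : ℕ, lam i = ζ ^ n := by
    intro i
    obtain ⟨n, -, hn⟩ := hζ.eq_pow_of_pow_eq_one (hlam i).1
    exact ⟨n, hn.symm⟩
  choose k hk using hk'
  have hknz : ∀ i, ¬ p ∣ k i := by
    intro i hdvd
    obtain ⟨c, hc⟩ := hdvd
    apply (hlam i).2
    rw [hk i, hc, pow_mul, hζ.pow_eq_one, one_pow]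
  constructor
  · -- r ≥ 1
    intro hr
    constructor
    · -- witness of degree s + max r p
      by_cases hrp : r ≤ p
      · set i₀ : Fin r := ⟨0, hr⟩
        refine ⟨monomial (W2 r s p i₀) 1, ?_, ?_⟩
        · apply isHomogeneous_monomial
          rw [W2_degree, max_eq_right hrp, Nat.add_comm]
        · refine witness_notMem hp0 hζ hk (S2 r s p i₀) ?_ ?_ (W2_mem i₀)
          · intro e m hw hm
            exact S2_P2 hp (hknz i₀) e m hw hm
          · intro e m h1 h2 _
            exact S2_P3 hp0 e m h1 h2
      · push_neg at hrp
        refine ⟨monomial (W1 r s) 1, ?_, ?_⟩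
        · apply isHomogeneous_monomial
          rw [W1_degree, max_eq_left hrp.le, Nat.add_comm]
        · refine witness_notMem hp0 hζ hk (S1 r s) ?_ ?_ W1_mem
          · intro e m _ hm
            exact S1_P2 e m hm
          · intro e m h1 h2 _
            exact S1_P3 e m h1 h2
    · -- upper bound
      rintro d ⟨f, hf, hfni⟩
      by_contra hgt
      push_neg at hgt
      exact hfni (homog_upper hp hζ hk hknz hf (Or.inl hgt))
  · -- r = 0
    intro hr
    constructor
    · refine ⟨monomial (W1 r s) 1, ?_, ?_⟩
      · apply isHomogeneous_monomial
        rw [W1_degree, hr, Nat.zero_add]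
      · refine witness_notMem hp0 hζ hk (S1 r s) ?_ ?_ W1_mem
        · intro e m _ hm
          exact S1_P2 e m hm
        · intro e m h1 h2 _
          exact S1_P3 e m h1 h2
    · rintro d ⟨f, hf, hfni⟩
      by_contra hgt
      push_neg at hgt
      exact hfni (homog_upper hp hζ hk hknz hf (Or.inr ⟨hr, hgt⟩))
end
end
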